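/- arXiv:math/9712229 — 3 statements merged into one kernel-verified Lean document; each statement's English description precedes it below -/
import Mathlib

section
/- For a positive integer d and a partition λ of d, the monomial symmetric function m_λ equals the sum of the quasi-symmetric functions Q̃_{S,d} over all subsets S ⊆ {1,...,d-1} whose type is λ. -/
open scoped Classical

/-- Break the word `1 2 ... d` after each element of `S`; the list of block lengths. -/
def compOf (d : ℕ) (S : Finset ℕ) : List ℕ :=
  let l := S.sort (· ≤ ·)
  List.zipWith (fun a b => a - b) (l ++ [d]) (0 :: l)

/-- The type of `S ⊆ {1,...,d-1}`: the multiset (partition) of block lengths of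
`1,2,...,d` broken after each element of `S`. -/
def typeOf (d : ℕ) (S : Finset ℕ) : Multiset ℕ := ↑(compOf d S)

/-- `r_μ! = ∏ᵢ rᵢ!` where `rᵢ` is the multiplicity of `i` in `μ`. -/
def rFact (μ : Multiset ℕ) : ℕ := ∏ i ∈ μ.toFinset, Nat.factorial (μ.count i)

/-- Gessel's fundamental quasi-symmetric function `Q_{S,d}`: sum of `x_{i₁}⋯x_{i_d}` over
weakly increasing sequences `i₁ ≤ ⋯ ≤ i_d` with `i_j < i_{j+1}` whenever `j ∈ S`. -/
noncomputable def Qfun (d : ℕ) (S : Finset ℕ) : MvPowerSeries ℕ ℚ :=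
  fun m => if ∃ f : Fin d → ℕ, Monotone f ∧
      (∀ i j : Fin d, (j : ℕ) = (i : ℕ) + 1 → (j : ℕ) ∈ S → f i < f j) ∧
      m = ∑ j, Finsupp.single (f j) 1 then 1 else 0

/-- `Q̃_{S,d}`: sum over weakly increasing sequences with `i_j < i_{j+1}` iff `j ∈ S`. -/
noncomputable def Qt (d : ℕ) (S : Finset ℕ) : MvPowerSeries ℕ ℚ :=
  fun m => if ∃ f : Fin d → ℕ, Monotone f ∧
      (∀ i j : Fin d, (j : ℕ) = (i : ℕ) + 1 → (f i < f j ↔ (j : ℕ) ∈ S)) ∧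
      m = ∑ j, Finsupp.single (f j) 1 then 1 else 0

/-- The monomial symmetric function `m_μ` (μ a multiset of positive parts):
the sum of all distinct monomials whose multiset of nonzero exponents is `μ`. -/
noncomputable def mMul (μ : Multiset ℕ) : MvPowerSeries ℕ ℚ :=
  fun m => if m.support.val.map ⇑m = μ then 1 else 0

noncomputable def monoF {d : ℕ} (f : Fin d → ℕ) : ℕ →₀ ℕ := ∑ j, Finsupp.single (f j) 1

noncomputable def descF (d : ℕ) (f : Fin d → ℕ) : Finset ℕ :=
  (Finset.Ico 1 d).filter
    (fun j => ∀ i i' : Fin d, (i' : ℕ) = (i : ℕ) + 1 → (i' : ℕ) = j → f i < f i')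

lemma toMultiset_monoF {d : ℕ} (f : Fin d → ℕ) :
    Finsupp.toMultiset (monoF f) = Multiset.map f Finset.univ.val := by
  rw [monoF, map_sum]
  simp only [Finsupp.toMultiset_single, one_smul]
  rw [Finset.sum_eq_multiset_sum]
  have : (fun x : Fin d => ({f x} : Multiset ℕ)) = (fun a : ℕ => ({a} : Multiset ℕ)) ∘ f := rfl
  rw [this, ← Multiset.map_map, Multiset.sum_map_singleton]

lemma toMultiset_inj {m₁ m₂ : ℕ →₀ ℕ} (h : Finsupp.toMultiset m₁ = Finsupp.toMultiset m₂) :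
    m₁ = m₂ := by
  ext a
  rw [← Finsupp.count_toMultiset, ← Finsupp.count_toMultiset, h]

lemma toMultiset_monoF_list {d : ℕ} (f : Fin d → ℕ) :
    Finsupp.toMultiset (monoF f) = ↑(List.ofFn f) := by
  rw [toMultiset_monoF, Fin.univ_val_map]

/-- Uniqueness of monotone witness. -/
lemma monoF_inj {d : ℕ} {f g : Fin d → ℕ} (hf : Monotone f) (hg : Monotone g)
    (h : monoF f = monoF g) : f = g := by
  have h2 : (↑(List.ofFn f) : Multiset ℕ) = ↑(List.ofFn g) := by
    rw [← toMultiset_monoF_list, ← toMultiset_monoF_list, h]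
  rw [Multiset.coe_eq_coe] at h2
  exact List.ofFn_injective (List.Perm.eq_of_sortedLE
    (List.sortedLE_ofFn_iff.2 hf) (List.sortedLE_ofFn_iff.2 hg) h2)

/-- Existence of monotone witness. -/
lemma monoF_exists {d : ℕ} {m : ℕ →₀ ℕ} (h : Multiset.card (Finsupp.toMultiset m) = d) :
    ∃ f : Fin d → ℕ, Monotone f ∧ monoF f = m := by
  set l : List ℕ := Multiset.sort (Finsupp.toMultiset m) (· ≤ ·) with hl
  have hlen : l.length = d := by
    rw [← h, ← Multiset.coe_card, Multiset.sort_eq]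
  refine ⟨fun j => l.get (Fin.cast hlen.symm j), ?_, ?_⟩
  · intro a b hab
    rcases eq_or_lt_of_le hab with rfl | hlt
    · exact le_rfl
    · exact (Multiset.pairwise_sort _ _).rel_get_of_lt (by simpa using hlt)
  · apply toMultiset_inj
    rw [toMultiset_monoF_list]
    have : List.ofFn (fun j : Fin d => l.get (Fin.cast hlen.symm j)) = l := by
      apply List.ext_getElem
      · simp [hlen]
      · intro i h1 h2
        simp
    rw [this, hl, Multiset.sort_eq]

lemma mem_descF {d : ℕ} (f : Fin d → ℕ) {i i' : Fin d} (h : (i' : ℕ) = (i : ℕ) + 1) :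
    (i' : ℕ) ∈ descF d f ↔ f i < f i' := by
  constructor
  · intro hm
    exact (Finset.mem_filter.1 hm).2 i i' h rfl
  · intro hlt
    refine Finset.mem_filter.2 ⟨Finset.mem_Ico.2 ⟨by omega, i'.2⟩, ?_⟩
    intro a a' ha ha'
    have : a' = i' := Fin.ext ha'
    subst this
    have : a = i := Fin.ext (by omega)
    subst this
    exact hlt

lemma mem_descF' {d : ℕ} (f : Fin d → ℕ) {j : ℕ} (h1 : 1 ≤ j) (h2 : j < d) :
    j ∈ descF d f ↔ f ⟨j - 1, by omega⟩ < f ⟨j, h2⟩ := by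
  have := mem_descF f (i := ⟨j - 1, by omega⟩) (i' := ⟨j, h2⟩) (by simp; omega)
  simpa using this

lemma descF_subset {d : ℕ} (f : Fin d → ℕ) : descF d f ⊆ Finset.Ico 1 d :=
  Finset.filter_subset _ _

lemma cond_iff {d : ℕ} (f : Fin d → ℕ) {S : Finset ℕ} (hS : S ⊆ Finset.Ico 1 d) :
    (∀ i j : Fin d, (j : ℕ) = (i : ℕ) + 1 → (f i < f j ↔ (j : ℕ) ∈ S)) ↔ S = descF d f := by
  constructor
  · intro hc
    ext j
    constructor
    · intro hj
      have hj' := Finset.mem_Ico.1 (hS hj)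
      have h2 : j < d := hj'.2
      have h1 : 1 ≤ j := hj'.1
      rw [mem_descF' f h1 h2]
      exact (hc ⟨j - 1, by omega⟩ ⟨j, h2⟩ (by simp; omega)).2 (by simpa using hj)
    · intro hj
      have hj' := Finset.mem_Ico.1 (descF_subset f hj)
      have h2 : j < d := hj'.2
      have h1 : 1 ≤ j := hj'.1
      have := (mem_descF' f h1 h2).1 hj
      exact (hc ⟨j - 1, by omega⟩ ⟨j, h2⟩ (by simp; omega)).1 this
  · rintro rfl
    intro i j h
    exact (mem_descF f h).symm

/-- Constancy of a monotone map beyond the last descent. -/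
lemma const_from {d : ℕ} {f : Fin d → ℕ} (hf : Monotone f) (a : Fin d)
    (hmax : ∀ j : ℕ, (a : ℕ) < j → j ∉ descF d f) :
    ∀ n, (a : ℕ) ≤ n → ∀ h : n < d, f ⟨n, h⟩ = f a := by
  intro n
  induction n with
  | zero =>
    intro ha h
    have : (a : ℕ) = 0 := by omega
    congr 1
    exact Fin.ext (by simp [this])
  | succ n IH =>
    intro ha h
    rcases eq_or_lt_of_le ha with heq | hlt
    · congr 1
      exact Fin.ext (by simp [← heq])
    · have hn : (a : ℕ) ≤ n := by omega
      have hnd : n < d := by omega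
      have hnot : (n + 1) ∉ descF d f := hmax _ (by omega)
      rw [mem_descF' f (by omega) h] at hnot
      simp only [Nat.add_sub_cancel] at hnot
      have hle : f ⟨n, hnd⟩ ≤ f ⟨n + 1, h⟩ := hf (by simp [Fin.le_def])
      have heq2 : f ⟨n + 1, h⟩ = f ⟨n, hnd⟩ := le_antisymm (not_lt.1 hnot) hle
      rw [heq2]
      exact IH hn hnd

lemma exp_add {m' : ℕ →₀ ℕ} {c k : ℕ} (h0 : m' c = 0) (hk : k ≠ 0) :
    ((m' + Finsupp.single c k).support.val.map ⇑(m' + Finsupp.single c k))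
      = k ::ₘ m'.support.val.map ⇑m' := by
  have hc : c ∉ m'.support := by simp [Finsupp.mem_support_iff, h0]
  have hsupp : (m' + Finsupp.single c k).support = insert c m'.support := by
    rw [Finsupp.support_add_eq, Finsupp.support_single_ne_zero _ hk]
    · rw [Finset.union_comm, Finset.insert_eq]
    · rw [Finsupp.support_single_ne_zero _ hk]
      simp [Finset.disjoint_singleton_right, hc]
  rw [hsupp, Finset.insert_val_of_notMem hc, Multiset.map_cons]
  congr 1
  · simp [h0]
  · apply Multiset.map_congr rfl
    intro v hv
    have : v ≠ c := by rintro rfl; exact hc hv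
    simp [Finsupp.single_apply, this, Ne.symm this]

lemma sort_erase_max (S : Finset ℕ) (hne : S.Nonempty) :
    S.sort (· ≤ ·) = (S.erase (S.max' hne)).sort (· ≤ ·) ++ [S.max' hne] := by
  set s := S.max' hne with hs
  symm
  refine (fun h1 h2 h3 => List.Perm.eq_of_pairwise' (r := (· ≤ ·)) h2 h3 h1) ?_ ?_ ?_
  · rw [← Multiset.coe_eq_coe, ← Multiset.coe_add, Finset.sort_eq, Finset.sort_eq,
      Finset.erase_val]
    have hmem : s ∈ S.val := S.max'_mem hne
    calc S.val.erase s + ({s} : Multiset ℕ) = s ::ₘ S.val.erase s := by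
          rw [add_comm]; rfl
      _ = S.val := Multiset.cons_erase hmem
  · rw [List.pairwise_append]
    refine ⟨Finset.pairwise_sort _ _, List.pairwise_singleton _ _, ?_⟩
    intro a ha b hb
    rw [List.mem_singleton] at hb
    subst hb
    have := Finset.mem_sort (α := ℕ) (· ≤ ·) |>.1 ha
    exact S.le_max' a (Finset.mem_of_mem_erase this)
  · exact Finset.pairwise_sort _ _

lemma typeOf_erase_max {d : ℕ} (S : Finset ℕ) (hne : S.Nonempty) (hlt : S.max' hne < d) :
    typeOf d S = (d - S.max' hne) ::ₘ typeOf (S.max' hne) (S.erase (S.max' hne)) := by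
  set s := S.max' hne with hs
  set l := (S.erase s).sort (· ≤ ·) with hl
  have hsort := sort_erase_max S hne
  rw [typeOf, compOf, typeOf, compOf]
  simp only [← hs, ← hl, hsort]
  have hzip : List.zipWith (fun a b => a - b) ((l ++ [s]) ++ [d]) (0 :: (l ++ [s]))
      = List.zipWith (fun a b => a - b) (l ++ [s]) (0 :: l) ++ [d - s] := by
    have h1 : (0 : ℕ) :: (l ++ [s]) = (0 :: l) ++ [s] := by simp
    rw [h1, List.zipWith_append]
    · rfl
    · simp
  rw [hzip, ← Multiset.coe_add]
  rw [add_comm]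
  rfl

lemma support_monoF {d : ℕ} {f : Fin d → ℕ} {v : ℕ} (hv : v ∈ (monoF f).support) :
    ∃ j, f j = v := by
  rw [Finsupp.mem_support_iff, ← Finsupp.count_toMultiset, toMultiset_monoF] at hv
  have := Multiset.count_pos.1 (Nat.pos_of_ne_zero hv)
  rw [Multiset.mem_map] at this
  obtain ⟨j, _, hj⟩ := this
  exact ⟨j, hj⟩

lemma typeOf_descF : ∀ d : ℕ, ∀ f : Fin d → ℕ, 0 < d → Monotone f →
    typeOf d (descF d f) = (monoF f).support.val.map ⇑(monoF f) := by
  intro d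
  induction d using Nat.strong_induction_on with
  | _ d IH =>
  intro f hd hf
  by_cases hne : (descF d f).Nonempty
  case neg =>
    rw [Finset.not_nonempty_iff_eq_empty] at hne
    have hconst : ∀ i : Fin d, f i = f ⟨0, hd⟩ := by
      intro i
      have := const_from hf ⟨0, hd⟩ (fun j _ => by simp [hne]) i (by simp) i.2
      simpa using this
    have hm : monoF f = Finsupp.single (f ⟨0, hd⟩) d := by
      apply toMultiset_inj
      rw [toMultiset_monoF, Finsupp.toMultiset_single,
        Multiset.map_congr rfl (fun x _ => hconst x), Multiset.nsmul_singleton,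
        Multiset.map_const']
      congr 1
      exact Finset.card_fin d
    rw [hm, hne]
    have h1 : typeOf d (∅ : Finset ℕ) = {d} := by
      rw [typeOf, compOf, Finset.sort_empty]
      rfl
    rw [h1, Finsupp.support_single_ne_zero _ hd.ne', Finset.singleton_val,
      Multiset.map_singleton, Finsupp.single_eq_same]
  case pos =>
    set s := (descF d f).max' hne with hs
    have hsmem : s ∈ descF d f := (descF d f).max'_mem hne
    have hsI := Finset.mem_Ico.1 (descF_subset f hsmem)
    have hs1 : 1 ≤ s := hsI.1
    have hsd : s < d := hsI.2
    set f' : Fin s → ℕ := fun j => f ⟨j, j.2.trans hsd⟩ with hf'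
    have hf'm : Monotone f' := fun a b hab => hf (by rw [Fin.mk_le_mk]; exact hab)
    set c := f ⟨s, hsd⟩ with hc
    have hdesc : descF s f' = (descF d f).erase s := by
      ext j
      rw [Finset.mem_erase]
      constructor
      · intro hj
        have hjI := Finset.mem_Ico.1 (descF_subset f' hj)
        have hj1 : 1 ≤ j := hjI.1
        have hjs : j < s := hjI.2
        rw [mem_descF' f' hj1 hjs] at hj
        refine ⟨by omega, ?_⟩
        rw [mem_descF' f hj1 (hjs.trans hsd)]
        exact hj
      · rintro ⟨hjs, hj⟩
        have hjI := Finset.mem_Ico.1 (descF_subset f hj)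
        have hj1 : 1 ≤ j := hjI.1
        have hjlt : j < s := lt_of_le_of_ne ((descF d f).le_max' j hj) hjs
        rw [mem_descF' f hj1 hjI.2] at hj
        rw [mem_descF' f' hj1 hjlt]
        exact hj
    have hconst : ∀ (n : ℕ) (h : n < d), s ≤ n → f ⟨n, h⟩ = c := by
      intro n h hn
      refine const_from hf ⟨s, hsd⟩ (fun j hj hmem => ?_) n hn h
      simp only [Fin.val_mk] at hj
      exact absurd ((descF d f).le_max' j hmem) (by rw [← hs]; omega)
    have hofn : List.ofFn f = List.ofFn f' ++ List.replicate (d - s) c := by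
      apply List.ext_getElem
      · simp; omega
      · intro i h1 h2
        rw [List.getElem_ofFn]
        by_cases his : i < s
        · rw [List.getElem_append_left (by simpa using his), List.getElem_ofFn]
        · rw [List.getElem_append_right (by simpa using not_lt.1 his),
            List.getElem_replicate]
          exact hconst i _ (not_lt.1 his)
    have hmf : monoF f = monoF f' + Finsupp.single c (d - s) := by
      apply toMultiset_inj
      rw [toMultiset_monoF_list, map_add, toMultiset_monoF_list, Finsupp.toMultiset_single,
        Multiset.nsmul_singleton, ← Multiset.coe_replicate, Multiset.coe_add, hofn]
    have hfresh : (monoF f') c = 0 := by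
      by_contra h0
      obtain ⟨j, hj⟩ := support_monoF (Finsupp.mem_support_iff.2 h0)
      have hj' : f ⟨(j : ℕ), lt_trans j.2 hsd⟩ = c := hj
      have h1 : f ⟨(j : ℕ), lt_trans j.2 hsd⟩ ≤ f ⟨s - 1, by omega⟩ := by
        apply hf
        simp only [Fin.mk_le_mk]
        have hj2 := j.2
        omega
      have h2 : f ⟨s - 1, by omega⟩ < c := (mem_descF' f hs1 hsd).1 hsmem
      rw [hj'] at h1
      exact absurd h2 (not_lt.2 h1)
    rw [typeOf_erase_max (descF d f) hne hsd, ← hs, ← hdesc,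
      IH s hsd f' (by omega) hf'm, hmf, exp_add hfresh (by omega)]


/-- `m_λ = Σ_{S : type(S)=λ} Q̃_{S,d}`. -/
theorem stmt4 (d : ℕ) (hd : 0 < d) (lam : Nat.Partition d) :
    mMul lam.parts
      = ∑ S ∈ (Finset.Ico 1 d).powerset.filter (fun S => typeOf d S = lam.parts),
          Qt d S := by
  funext m
  have hQt : ∀ S : Finset ℕ, Qt d S m = if (∃ f : Fin d → ℕ, Monotone f ∧
      (∀ i j : Fin d, (j : ℕ) = (i : ℕ) + 1 → (f i < f j ↔ (j : ℕ) ∈ S)) ∧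
      m = monoF f) then (1 : ℚ) else 0 := fun S => rfl
  have hmM : mMul lam.parts m
      = if m.support.val.map ⇑m = lam.parts then (1 : ℚ) else 0 := rfl
  have hsum : (∑ S ∈ (Finset.Ico 1 d).powerset.filter
        (fun S => typeOf d S = lam.parts), Qt d S) m
      = ∑ S ∈ (Finset.Ico 1 d).powerset.filter (fun S => typeOf d S = lam.parts),
          Qt d S m :=
    Finset.sum_apply m _ _
  rw [hsum, hmM]
  by_cases hm : m.support.val.map ⇑m = lam.parts
  · have hcard : Multiset.card (Finsupp.toMultiset m) = d := by
      rw [Finsupp.card_toMultiset, ← lam.parts_sum, ← hm, Finsupp.sum,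
        Finset.sum_eq_multiset_sum]
      rfl
    obtain ⟨f₀, hf₀mono, hf₀⟩ := monoF_exists hcard
    have hS₀mem : descF d f₀ ∈ (Finset.Ico 1 d).powerset.filter
        (fun S => typeOf d S = lam.parts) := by
      rw [Finset.mem_filter, Finset.mem_powerset]
      exact ⟨descF_subset f₀, by rw [typeOf_descF d f₀ hd hf₀mono, hf₀, hm]⟩
    have h1 : Qt d (descF d f₀) m = 1 := by
      rw [hQt]
      exact if_pos ⟨f₀, hf₀mono, (cond_iff f₀ (descF_subset f₀)).2 rfl, hf₀.symm⟩
    have hside : ∀ b ∈ (Finset.Ico 1 d).powerset.filter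
        (fun S => typeOf d S = lam.parts), b ≠ descF d f₀ → Qt d b m = 0 := by
      intro b hb hbne
      rw [hQt]
      apply if_neg
      rintro ⟨f, hfm, hfc, hfe⟩
      have hbsub : b ⊆ Finset.Ico 1 d := Finset.mem_powerset.1 (Finset.mem_filter.1 hb).1
      have hbd : b = descF d f := (cond_iff f hbsub).1 hfc
      have hff : f = f₀ := monoF_inj hfm hf₀mono (by rw [← hfe, hf₀])
      exact hbne (by rw [hbd, hff])
    rw [Finset.sum_eq_single_of_mem _ hS₀mem hside, h1, if_pos hm]
  · rw [if_neg hm]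
    symm
    apply Finset.sum_eq_zero
    intro S hS
    rw [hQt]
    apply if_neg
    rintro ⟨f, hfm, hfc, hfe⟩
    have hSsub : S ⊆ Finset.Ico 1 d := Finset.mem_powerset.1 (Finset.mem_filter.1 hS).1
    have h2 : typeOf d S = lam.parts := (Finset.mem_filter.1 hS).2
    rw [(cond_iff f hSsub).1 hfc, typeOf_descF d f hd hfm, ← hfe] at h2
    exact hm h2
end

section
/- Let G be a graph with d vertices such that to each sequencing s of G there is associated an order-reversing labelling α_s of the poset ō(s), with α_s = α_{s'} whenever s and s' induce the same acyclic orientation of G. Then the chromatic symmetric function satisfies X_G = Σ_s Q_{D(α_s, s), d}, the sum over all sequencings s of G. -/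
open scoped Classical

/-- A set partition of a finite type `α`, given as a finset of nonempty pairwise disjoint
blocks covering everything. -/
def IsSetPartition {α : Type} [DecidableEq α] [Fintype α] (P : Finset (Finset α)) : Prop :=
  (∀ b ∈ P, b.Nonempty) ∧ (∀ b ∈ P, ∀ c ∈ P, b ≠ c → Disjoint b c) ∧
    P.sup id = Finset.univ

/-- The augmented monomial symmetric function `m̃_μ = r_μ! · m_μ`. -/
noncomputable def mAug (μ : Multiset ℕ) : MvPowerSeries ℕ ℚ :=
  (rFact μ : ℚ) • mMul μ

/-- Stanley's chromatic symmetric function `X_G = Σ_π m̃_π`, summed over stable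
partitions `π` of `G`. -/
noncomputable def XG {V : Type} [Fintype V] [DecidableEq V] (G : SimpleGraph V) :
    MvPowerSeries ℕ ℚ :=
  ∑ P ∈ Finset.univ.filter (fun P : Finset (Finset V) =>
      IsSetPartition P ∧ ∀ b ∈ P, ∀ x ∈ b, ∀ y ∈ b, ¬ G.Adj x y),
    mAug (P.val.map Finset.card)

/-- The strict order of the poset `ō(s)` induced by the acyclic orientation `o(s)` of `G`
coming from a sequencing `s`: the transitive closure of "edge directed from `s j` to
`s i` for `i < j`", i.e. `s i < s j` whenever there is an edge from `s j` to `s i`. -/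
def ltRel {V : Type} (G : SimpleGraph V) {d : ℕ} (s : Fin d ≃ V) : V → V → Prop :=
  Relation.TransGen (fun x y => G.Adj x y ∧ s.symm x < s.symm y)

/-- The descent set of `g : Fin d → Fin d` (positions `i ∈ {1,...,d-1}` with
`g(i) > g(i+1)` in one-indexed notation). -/
def descSet (d : ℕ) (g : Fin d → Fin d) : Finset ℕ :=
  (Finset.Ico 1 d).filter
    (fun i => ∃ h' : i - 1 < d, ∃ h : i < d, g ⟨i, h⟩ < g ⟨i - 1, h'⟩)


set_option linter.unusedSectionVars false
set_option linter.unusedVariables false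
set_option maxHeartbeats 1000000
open Classical Finset Function

open Classical Finset

section Grade
variable {A B : Type} {f : A → ℕ} {g : B → ℕ} {K : Finset ℕ}

private lemma ucongr (u : ∀ k : {k // k ∈ K}, {a // f a = (k:ℕ)} ≃ {b // g b = (k:ℕ)})
    {k k' : {k // k ∈ K}} (hkk : k = k') (a : A) (h : f a = k) (h' : f a = k') :
    ((u k) ⟨a, h⟩ : {b // g b = (k:ℕ)}).1 = ((u k') ⟨a, h'⟩).1 := by subst hkk; rfl

private lemma ucongr' (u : ∀ k : {k // k ∈ K}, {a // f a = (k:ℕ)} ≃ {b // g b = (k:ℕ)})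
    {k k' : {k // k ∈ K}} (hkk : k = k') (b : B) (h : g b = k) (h' : g b = k') :
    ((u k).symm ⟨b, h⟩ : {a // f a = (k:ℕ)}).1 = ((u k').symm ⟨b, h'⟩).1 := by subst hkk; rfl

/-- grade-preserving bijections decompose as products of fiberwise bijections -/
noncomputable def gradeEquiv (f : A → ℕ) (g : B → ℕ) (K : Finset ℕ)
    (hf : ∀ a, f a ∈ K) (hg : ∀ b, g b ∈ K) :
    {e : A ≃ B // ∀ a, g (e a) = f a} ≃
      (∀ k : {k // k ∈ K}, {a // f a = (k:ℕ)} ≃ {b // g b = (k:ℕ)}) where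
  toFun e k := Equiv.subtypeEquiv e.1 (fun a => by
    constructor
    · intro h; rw [e.2]; exact h
    · intro h; rw [e.2] at h; exact h)
  invFun u := by
    refine ⟨⟨fun a => (u ⟨f a, hf a⟩ ⟨a, rfl⟩ : {b // g b = f a}).1,
            fun b => ((u ⟨g b, hg b⟩).symm ⟨b, rfl⟩ : {a // f a = g b}).1, ?_, ?_⟩, ?_⟩
    · intro a
      have hga : g ((u ⟨f a, hf a⟩ ⟨a, rfl⟩ : {b // g b = f a}).1) = f a :=
        (u ⟨f a, hf a⟩ ⟨a, rfl⟩).2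
      set b := (u ⟨f a, hf a⟩ ⟨a, rfl⟩ : {b // g b = f a}).1 with hb
      show ((u ⟨g b, hg b⟩).symm ⟨b, rfl⟩ : {a // f a = g b}).1 = a
      have hkk : (⟨g b, hg b⟩ : {k // k ∈ K}) = ⟨f a, hf a⟩ := Subtype.ext hga
      rw [ucongr' u hkk b rfl hga]
      have : ((u ⟨f a, hf a⟩) ⟨a, rfl⟩ : {b // g b = f a}) = ⟨b, hga⟩ := Subtype.ext rfl
      rw [← this, Equiv.symm_apply_apply]
    · intro b
      have hfa : f (((u ⟨g b, hg b⟩).symm ⟨b, rfl⟩ : {a // f a = g b}).1) = g b :=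
        ((u ⟨g b, hg b⟩).symm ⟨b, rfl⟩).2
      set a := ((u ⟨g b, hg b⟩).symm ⟨b, rfl⟩ : {a // f a = g b}).1 with ha
      show ((u ⟨f a, hf a⟩) ⟨a, rfl⟩ : {b // g b = f a}).1 = b
      have hkk : (⟨f a, hf a⟩ : {k // k ∈ K}) = ⟨g b, hg b⟩ := Subtype.ext hfa
      rw [ucongr u hkk a rfl hfa]
      have : ((u ⟨g b, hg b⟩).symm ⟨b, rfl⟩ : {a // f a = g b}) = ⟨a, hfa⟩ := Subtype.ext rfl
      rw [← this, Equiv.apply_symm_apply]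
    · intro a
      exact (u ⟨f a, hf a⟩ ⟨a, rfl⟩).2
  left_inv e := by
    apply Subtype.ext; apply Equiv.ext; intro a; rfl
  right_inv u := by
    funext k; apply Equiv.ext; intro x
    apply Subtype.ext
    show ((u ⟨f x.1, hf x.1⟩) ⟨x.1, rfl⟩ : {b // g b = f x.1}).1 = _
    have hkk : (⟨f x.1, hf x.1⟩ : {k // k ∈ K}) = k := Subtype.ext x.2
    rw [ucongr u hkk x.1 rfl x.2]

end Grade

open Classical Finset Function
set_option linter.unusedSectionVars false

section SortSec
variable {V : Type} [Fintype V] [DecidableEq V] {d : ℕ}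

lemma exists_sortKey (hd : Fintype.card V = d) (key : V → ℕ) (hinj : Injective key) :
    ∃ s : Fin d ≃ V, StrictMono fun i => key (s i) := by
  classical
  set T := Finset.univ.image key with hTdef
  have hT : T.card = d := by
    rw [hTdef, Finset.card_image_of_injective _ hinj, Finset.card_univ, hd]
  set iso := T.orderIsoOfFin hT with hiso
  set k' : V → {x // x ∈ T} := fun v => ⟨key v, Finset.mem_image_of_mem key (Finset.mem_univ v)⟩
    with hk'
  have hbij : Bijective k' := by
    constructor
    · intro a b h; exact hinj (congrArg Subtype.val h)
    · rintro ⟨x, hx⟩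
      rcases Finset.mem_image.mp hx with ⟨v, _, hv⟩
      exact ⟨v, Subtype.ext hv⟩
  refine ⟨iso.toEquiv.trans (Equiv.ofBijective k' hbij).symm, ?_⟩
  have h1 : ∀ i : Fin d, key ((Equiv.ofBijective k' hbij).symm (iso.toEquiv i)) = (iso i : ℕ) :=
    fun i => congrArg Subtype.val ((Equiv.ofBijective k' hbij).apply_symm_apply (iso.toEquiv i))
  intro i j hij
  show key ((Equiv.ofBijective k' hbij).symm (iso.toEquiv i)) <
    key ((Equiv.ofBijective k' hbij).symm (iso.toEquiv j))
  rw [h1, h1]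
  exact iso.strictMono hij

lemma sortKey_unique (key : V → ℕ) (hinj : Injective key) (s s' : Fin d ≃ V)
    (h : StrictMono (fun i => key (s i))) (h' : StrictMono (fun i => key (s' i))) : s = s' := by
  have hwf : WellFoundedLT (Fin d) := Finite.to_wellFoundedLT
  have hr : Set.range (fun i => key (s i)) = Set.range (fun i => key (s' i)) := by
    have hgen : ∀ (t : Fin d ≃ V), Set.range (fun i => key (t i)) = Set.range key := by
      intro t
      show Set.range (key ∘ t) = Set.range key
      rw [Set.range_comp, Equiv.range_eq_univ, Set.image_univ]
    rw [hgen s, hgen s']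
  have := (StrictMono.range_inj h h').mp hr
  apply Equiv.ext; intro i
  exact hinj (congrFun this i)

end SortSec

/-- count of value i among f's values, as Finsupp sum -/
lemma single_sum_apply {d : ℕ} (f : Fin d → ℕ) (i : ℕ) :
    (∑ j, Finsupp.single (f j) 1) i = Multiset.count i (Finset.univ.val.map f) := by
  rw [Finsupp.finset_sum_apply, Multiset.count_map]
  rw [show (Multiset.filter (fun a => i = f a) Finset.univ.val) =
      (Finset.univ.filter (fun a => i = f a)).val from rfl, ← Finset.card_def, Finset.card_filter]
  simp [Finsupp.single_apply, eq_comm]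

/-- uniqueness of the monotone function with given single-sum -/
lemma monotone_unique {d : ℕ} {f f' : Fin d → ℕ} (hf : Monotone f) (hf' : Monotone f')
    (h : ∑ j, Finsupp.single (f j) 1 = ∑ j, Finsupp.single (f' j) 1) : f = f' := by
  have hm : (Finset.univ.val.map f) = (Finset.univ.val.map f') := by
    ext i
    rw [← single_sum_apply, ← single_sum_apply, h]
  rw [Fin.univ_val_map, Fin.univ_val_map] at hm
  have hperm : (List.ofFn f).Perm (List.ofFn f') := Multiset.coe_eq_coe.mp hm
  exact List.ofFn_injective
    (List.Perm.eq_of_sortedLE (hf.sortedLE_ofFn) (hf'.sortedLE_ofFn) hperm)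

open Classical Finset

section Chain
variable {β : Type} [Preorder β] {d : ℕ}

lemma chain_le (g : Fin d → β) (i j : Fin d) (hij : i ≤ j)
    (H : ∀ k, (hk : k < d) → i.1 < k → k ≤ j.1 →
      g ⟨k - 1, by omega⟩ ≤ g ⟨k, hk⟩) : g i ≤ g j := by
  obtain ⟨jv, hjv⟩ := j
  rw [Fin.le_def] at hij
  simp only [Fin.val_mk] at hij H
  induction jv with
  | zero =>
    have : i = ⟨0, hjv⟩ := by apply Fin.ext; simp only [Fin.val_mk]; omega
    rw [this]
  | succ n ih =>
    rcases Nat.lt_or_ge i.1 (n+1) with hlt | hge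
    · have hn : n < d := by omega
      have h1 : g i ≤ g ⟨n, hn⟩ := by
        refine ih hn (by omega) ?_
        intro k hk hik hkn; exact H k hk hik (by omega)
      have h2 : g ⟨n, hn⟩ ≤ g ⟨n+1, hjv⟩ := by
        have := H (n+1) hjv (by omega) (le_refl _)
        simpa using this
      exact le_trans h1 h2
    · have : i = ⟨n+1, hjv⟩ := by apply Fin.ext; simp only [Fin.val_mk]; omega
      rw [this]

lemma strictMono_fin_of_adj {g : Fin d → β}
    (H : ∀ k, (hk : k + 1 < d) → g ⟨k, by omega⟩ < g ⟨k+1, hk⟩) : StrictMono g := by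
  intro i j hij
  obtain ⟨jv, hjv⟩ := j
  rw [Fin.lt_def] at hij
  simp only [Fin.val_mk] at hij
  induction jv with
  | zero => omega
  | succ n ih =>
    have hn : n < d := by omega
    have h2 : g ⟨n, hn⟩ < g ⟨n+1, hjv⟩ := H n hjv
    rcases Nat.lt_or_ge i.1 n with hlt | hge
    · exact lt_trans (ih hn (by omega)) h2
    · have : i = ⟨n, hn⟩ := by apply Fin.ext; simp only [Fin.val_mk]; omega
      rw [this]; exact h2

end Chain

section KeyArith

lemma key_le_cases {d a b c e : ℕ} (hb : b < d) (he : e < d) (h : d*a+b < d*c+e) :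
    a < c ∨ (a = c ∧ b < e) := by
  rcases Nat.lt_or_ge a c with h1 | h1
  · exact Or.inl h1
  rcases Nat.lt_or_ge c a with h2 | h2
  · exfalso
    have hm : d*(c+1) ≤ d*a := Nat.mul_le_mul_left d h2
    rw [Nat.mul_succ] at hm; omega
  · have hac : a = c := le_antisymm h2 h1
    subst hac
    exact Or.inr ⟨rfl, by omega⟩

lemma key_inj_parts {d a b c e : ℕ} (hb : b < d) (he : e < d) (h : d*a+b = d*c+e) :
    a = c ∧ b = e := by
  rcases Nat.lt_trichotomy a c with h1 | h1 | h1
  · exfalso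
    have hm : d*(a+1) ≤ d*c := Nat.mul_le_mul_left d h1
    rw [Nat.mul_succ] at hm; omega
  · subst h1; exact ⟨rfl, by omega⟩
  · exfalso
    have hm : d*(c+1) ≤ d*a := Nat.mul_le_mul_left d h1
    rw [Nat.mul_succ] at hm; omega

lemma key_step_lt {d a b c e : ℕ} (hb : b < d) (h : a < c) : d*a+b < d*c+e := by
  have hm : d*(a+1) ≤ d*c := Nat.mul_le_mul_left d h
  rw [Nat.mul_succ] at hm; omega

end KeyArith

open Finset


section Part
variable {V : Type} [Fintype V] [DecidableEq V]

def fibersOf (κ : V → ℕ) : Finset (Finset V) :=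
  univ.image fun v => univ.filter fun w => κ w = κ v

def Proper (G : SimpleGraph V) (κ : V → ℕ) : Prop := ∀ x y, G.Adj x y → κ x ≠ κ y

lemma exists_blk {P : Finset (Finset V)} (hP : IsSetPartition P) (v : V) :
    ∃ b, b ∈ P ∧ v ∈ b := by
  have hv : v ∈ P.sup id := hP.2.2.symm ▸ mem_univ v
  rw [Finset.sup_eq_biUnion] at hv
  rcases Finset.mem_biUnion.mp hv with ⟨b, hb, hvb⟩
  exact ⟨b, hb, hvb⟩

noncomputable def blk {P : Finset (Finset V)} (hP : IsSetPartition P) (v : V) : Finset V :=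
  (exists_blk hP v).choose

lemma blk_mem {P : Finset (Finset V)} (hP : IsSetPartition P) (v : V) : blk hP v ∈ P :=
  (exists_blk hP v).choose_spec.1

lemma mem_blk {P : Finset (Finset V)} (hP : IsSetPartition P) (v : V) : v ∈ blk hP v :=
  (exists_blk hP v).choose_spec.2

lemma blk_eq {P : Finset (Finset V)} (hP : IsSetPartition P) {v : V} {b : Finset V}
    (hb : b ∈ P) (hvb : v ∈ b) : b = blk hP v := by
  by_contra hne
  have := hP.2.1 b hb (blk hP v) (blk_mem hP v) hne
  exact (Finset.disjoint_left.mp this hvb) (mem_blk hP v)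

lemma fiber_mem_fibersOf (κ : V → ℕ) (v : V) :
    (univ.filter fun w => κ w = κ v) ∈ fibersOf κ :=
  Finset.mem_image_of_mem _ (mem_univ v)

lemma fibersOf_block_eq {κ : V → ℕ} {b : Finset V} (hb : b ∈ fibersOf κ) {v : V}
    (hvb : v ∈ b) : b = univ.filter fun w => κ w = κ v := by
  rcases Finset.mem_image.mp hb with ⟨u, _, hu⟩
  subst hu
  have hκ : κ v = κ u := (Finset.mem_filter.mp hvb).2
  ext w
  simp only [Finset.mem_filter, mem_univ, true_and, hκ]

lemma fibersOf_const {κ : V → ℕ} {b : Finset V} (hb : b ∈ fibersOf κ) {v w : V}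
    (hvb : v ∈ b) (hwb : w ∈ b) : κ v = κ w := by
  rw [fibersOf_block_eq hb hvb] at hwb
  exact ((Finset.mem_filter.mp hwb).2).symm

lemma fibersOf_isSetPartition (κ : V → ℕ) : IsSetPartition (fibersOf κ) := by
  refine ⟨?_, ?_, ?_⟩
  · intro b hb
    rcases Finset.mem_image.mp hb with ⟨u, _, hu⟩
    exact ⟨u, hu ▸ (Finset.mem_filter.mpr ⟨mem_univ u, rfl⟩)⟩
  · intro b hb c hc hne
    rw [Finset.disjoint_left]
    intro v hvb hvc
    exact hne ((fibersOf_block_eq hb hvb).trans (fibersOf_block_eq hc hvc).symm)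
  · apply Finset.eq_univ_of_forall
    intro v
    rw [Finset.sup_eq_biUnion]
    exact Finset.mem_biUnion.mpr ⟨_, fiber_mem_fibersOf κ v,
      Finset.mem_filter.mpr ⟨mem_univ v, rfl⟩⟩

lemma fibersOf_stable {G : SimpleGraph V} {κ : V → ℕ} (hκ : Proper G κ) :
    ∀ b ∈ fibersOf κ, ∀ x ∈ b, ∀ y ∈ b, ¬ G.Adj x y := by
  intro b hb x hx y hy hadj
  exact hκ x y hadj (fibersOf_const hb hx hy)

lemma proper_of_fibers_stable {G : SimpleGraph V} {κ : V → ℕ}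
    (h : ∀ b ∈ fibersOf κ, ∀ x ∈ b, ∀ y ∈ b, ¬ G.Adj x y) : Proper G κ := by
  intro x y hadj hxy
  refine h _ (fiber_mem_fibersOf κ y) x ?_ y ?_ hadj
  · exact Finset.mem_filter.mpr ⟨mem_univ x, hxy⟩
  · exact Finset.mem_filter.mpr ⟨mem_univ y, rfl⟩

/-- sum over a partition -/
lemma sum_over_partition {P : Finset (Finset V)} (hP : IsSetPartition P)
    {M : Type} [AddCommMonoid M] (F : V → M) :
    ∑ v, F v = ∑ b ∈ P, ∑ v ∈ b, F v := by
  have huniv : (univ : Finset V) = P.biUnion id := by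
    rw [← Finset.sup_eq_biUnion, hP.2.2]
  rw [huniv]
  exact Finset.sum_biUnion (fun b hb c hc hne => hP.2.1 b hb c hc hne)

end Part

section Count
variable {V : Type} [Fintype V] [DecidableEq V]

/-- colorings with fiber partition P and exponent m -/
def SP (P : Finset (Finset V)) (m : ℕ →₀ ℕ) :=
  {κ : V → ℕ // fibersOf κ = P ∧ ∑ v, Finsupp.single (κ v) 1 = m}

/-- injective block-colorings -/
def InjC (P : Finset (Finset V)) (m : ℕ →₀ ℕ) :=
  {c : {b // b ∈ P} → ℕ // Function.Injective c ∧
    ∑ b : {b // b ∈ P}, Finsupp.single (c b) (b.1.card) = m}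

/-- grade-preserving bijections -/
def GP (P : Finset (Finset V)) (m : ℕ →₀ ℕ) :=
  {e : {b // b ∈ P} ≃ {i // i ∈ m.support} // ∀ b, m (e b).1 = b.1.card}

noncomputable instance (P : Finset (Finset V)) (m : ℕ →₀ ℕ) : Fintype (GP P m) := by
  unfold GP; infer_instance

/-- block sum lemma: if κ = c ∘ blk pointwise then the exponent sums match -/
lemma sum_single_blocks {P : Finset (Finset V)} (hP : IsSetPartition P)
    (κ : V → ℕ) (c : {b // b ∈ P} → ℕ)
    (hκc : ∀ v, κ v = c ⟨blk hP v, blk_mem hP v⟩) :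
    ∑ v, Finsupp.single (κ v) 1 = ∑ b : {b // b ∈ P}, Finsupp.single (c b) (b.1.card) := by
  rw [sum_over_partition hP, Finset.univ_eq_attach, ← Finset.sum_attach P
    (fun b => ∑ v ∈ b, Finsupp.single (κ v) 1)]
  apply Finset.sum_congr rfl
  intro b _
  have hconst : ∀ v ∈ b.1, κ v = c b := by
    intro v hv
    rw [hκc v]
    congr 1
    exact Subtype.ext (blk_eq hP b.2 hv).symm
  rw [Finset.sum_congr rfl (fun v hv => by rw [hconst v hv])]
  rw [Finset.sum_const, Finsupp.smul_single, smul_eq_mul, mul_one]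

end Count

section Equivs
variable {V : Type} [Fintype V] [DecidableEq V]

noncomputable def pick {P : Finset (Finset V)} (hP : IsSetPartition P) (b : {b // b ∈ P}) : V :=
  (hP.1 b.1 b.2).choose

lemma pick_mem {P : Finset (Finset V)} (hP : IsSetPartition P) (b : {b // b ∈ P}) :
    pick hP b ∈ b.1 := (hP.1 b.1 b.2).choose_spec

noncomputable def equivSP {P : Finset (Finset V)} (hP : IsSetPartition P) (m : ℕ →₀ ℕ) :
    SP P m ≃ InjC P m where
  toFun κ := by
    refine ⟨fun b => κ.1 (pick hP b), ?_, ?_⟩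
    · intro b b' h
      have hb : b.1 ∈ fibersOf κ.1 := by rw [κ.2.1]; exact b.2
      have hb' : b'.1 ∈ fibersOf κ.1 := by rw [κ.2.1]; exact b'.2
      apply Subtype.ext
      dsimp only at h
      rw [fibersOf_block_eq hb (pick_mem hP b), fibersOf_block_eq hb' (pick_mem hP b'), h]
    · rw [← sum_single_blocks hP κ.1 _ ?_, κ.2.2]
      intro v
      have hblk : blk hP v ∈ fibersOf κ.1 := by rw [κ.2.1]; exact blk_mem hP v
      exact fibersOf_const hblk (mem_blk hP v)
        (pick_mem hP ⟨blk hP v, blk_mem hP v⟩)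
  invFun c := by
    refine ⟨fun v => c.1 ⟨blk hP v, blk_mem hP v⟩, ?_, ?_⟩
    · have hfib : ∀ u : V, (Finset.univ.filter fun w =>
          c.1 ⟨blk hP w, blk_mem hP w⟩ = c.1 ⟨blk hP u, blk_mem hP u⟩) = blk hP u := by
        intro u
        ext w
        simp only [Finset.mem_filter, Finset.mem_univ, true_and]
        constructor
        · intro h
          have : blk hP w = blk hP u := congrArg Subtype.val (c.2.1 h)
          exact this ▸ mem_blk hP w
        · intro hw
          have hbu : blk hP u = blk hP w := blk_eq hP (blk_mem hP u) hw
          exact (congrArg c.1 (Subtype.ext hbu)).symm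
      unfold fibersOf
      ext b
      simp only [Finset.mem_image, Finset.mem_univ, true_and]
      constructor
      · rintro ⟨u, hu⟩
        rw [← hu, hfib u]
        exact blk_mem hP u
      · intro hb
        refine ⟨pick hP ⟨b, hb⟩, ?_⟩
        rw [hfib (pick hP ⟨b, hb⟩)]
        exact (blk_eq hP hb (pick_mem hP ⟨b, hb⟩)).symm
    · rw [sum_single_blocks hP _ c.1 (fun v => rfl)]
      exact c.2.2
  left_inv κ := by
    apply Subtype.ext
    funext v
    have hblk : blk hP v ∈ fibersOf κ.1 := by rw [κ.2.1]; exact blk_mem hP v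
    exact (fibersOf_const hblk
      (pick_mem hP ⟨blk hP v, blk_mem hP v⟩) (mem_blk hP v))
  right_inv c := by
    apply Subtype.ext
    funext b
    exact congrArg c.1 (Subtype.ext (blk_eq hP b.2 (pick_mem hP b)).symm)

lemma injC_card_eq {P : Finset (Finset V)} {m : ℕ →₀ ℕ} (c : InjC P m)
    (b₀ : {b // b ∈ P}) : m (c.1 b₀) = b₀.1.card := by
  have happ : (∑ b : {b // b ∈ P}, Finsupp.single (c.1 b) (b.1.card)) (c.1 b₀) = m (c.1 b₀) := by
    rw [c.2.2]
  rw [Finsupp.finset_sum_apply] at happ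
  rw [← happ]
  rw [Finset.sum_eq_single b₀]
  · simp [Finsupp.single_apply]
  · intro b _ hne
    rw [Finsupp.single_apply, if_neg]
    intro h
    exact hne (c.2.1 h)
  · intro h
    exact absurd (Finset.mem_univ b₀) h

noncomputable def equivInj {P : Finset (Finset V)} (hP : IsSetPartition P) (m : ℕ →₀ ℕ) :
    InjC P m ≃ GP P m where
  toFun c := by
    have hsupp : ∀ b : {b // b ∈ P}, c.1 b ∈ m.support := by
      intro b
      rw [Finsupp.mem_support_iff, injC_card_eq c b]
      have := hP.1 b.1 b.2
      rw [← Finset.card_pos] at this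
      omega
    refine ⟨Equiv.ofBijective (fun b => ⟨c.1 b, hsupp b⟩) ⟨?_, ?_⟩, ?_⟩
    · intro b b' h
      exact c.2.1 (congrArg Subtype.val h)
    · rintro ⟨i, hi⟩
      by_contra hno
      push_neg at hno
      have hne : ∀ b, c.1 b ≠ i := by
        intro b hb
        exact hno b (Subtype.ext hb)
      have : (∑ b : {b // b ∈ P}, Finsupp.single (c.1 b) (b.1.card)) i = 0 := by
        rw [Finsupp.finset_sum_apply]
        apply Finset.sum_eq_zero
        intro b _
        rw [Finsupp.single_apply, if_neg (hne b)]
      rw [c.2.2] at this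
      exact (Finsupp.mem_support_iff.mp hi) this
    · intro b
      exact injC_card_eq c b
  invFun e := by
    refine ⟨fun b => (e.1 b).1, ?_, ?_⟩
    · intro b b' h
      exact e.1.injective (Subtype.ext h)
    · ext i
      rw [Finsupp.finset_sum_apply]
      by_cases hi : i ∈ m.support
      · rw [Finset.sum_eq_single (e.1.symm ⟨i, hi⟩)]
        · rw [Finsupp.single_apply]
          have h1 : (e.1 (e.1.symm ⟨i, hi⟩)).1 = i := by rw [Equiv.apply_symm_apply]
          rw [if_pos h1]
          have := e.2 (e.1.symm ⟨i, hi⟩)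
          rw [h1] at this
          exact this.symm
        · intro b _ hne
          rw [Finsupp.single_apply, if_neg]
          intro h
          apply hne
          have : e.1 b = ⟨i, hi⟩ := Subtype.ext h
          rw [← this, Equiv.symm_apply_apply]
        · intro h
          exact absurd (Finset.mem_univ _) h
      · rw [Finsupp.notMem_support_iff.mp hi]
        apply Finset.sum_eq_zero
        intro b _
        rw [Finsupp.single_apply, if_neg]
        intro h
        exact hi (h ▸ (e.1 b).2)
  left_inv c := by
    apply Subtype.ext; funext b; rfl
  right_inv e := by
    apply Subtype.ext; apply Equiv.ext; intro b
    apply Subtype.ext; rfl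

end Equivs

section CountGP
variable {V : Type} [Fintype V] [DecidableEq V]

def exps (m : ℕ →₀ ℕ) : Multiset ℕ := m.support.val.map ⇑m

lemma count_via_subtype {A : Type} (P : Finset A) (f : A → ℕ)
    (k : ℕ) : Multiset.count k (P.val.map f) = Fintype.card {b : {b // b ∈ P} // f b.1 = k} := by
  classical
  rw [Multiset.count_map]
  have h1 : (Multiset.filter (fun a => k = f a) P.val).card =
      (P.filter (fun a => f a = k)).card := by
    congr 1
    apply Multiset.filter_congr
    intro a _
    exact ⟨fun h => h.symm, fun h => h.symm⟩
  rw [h1, ← Fintype.card_coe]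
  apply Fintype.card_congr
  exact ((Equiv.subtypeEquivRight (fun a => Finset.mem_filter)).trans
    (Equiv.subtypeSubtypeEquivSubtypeInter _ _).symm)

lemma gp_type_eq {P : Finset (Finset V)} {m : ℕ →₀ ℕ} (e : GP P m) :
    exps m = P.val.map Finset.card := by
  apply Multiset.ext.mpr
  intro k
  rw [count_via_subtype P Finset.card k,
      show exps m = m.support.val.map ⇑m from rfl, count_via_subtype m.support ⇑m k]
  apply Fintype.card_congr
  apply (Equiv.subtypeEquiv e.1.symm ?_)
  intro i
  have h2 := e.2 (e.1.symm i)
  rw [Equiv.apply_symm_apply] at h2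
  rw [h2]
end CountGP

section CardGP
variable {V : Type} [Fintype V] [DecidableEq V]


lemma gp_card {P : Finset (Finset V)} {m : ℕ →₀ ℕ}
    (h : exps m = P.val.map Finset.card) :
    Fintype.card (GP P m) = rFact (P.val.map Finset.card) := by
  classical
  set μ := P.val.map Finset.card with hμ
  set K := μ.toFinset with hK
  have hf : ∀ b : {b // b ∈ P}, Finset.card b.1 ∈ K := by
    intro b
    rw [hK, Multiset.mem_toFinset, hμ]
    exact Multiset.mem_map_of_mem _ b.2
  have hg : ∀ i : {i // i ∈ m.support}, m i.1 ∈ K := by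
    intro i
    rw [hK, Multiset.mem_toFinset, ← h]
    exact Multiset.mem_map_of_mem _ (by exact_mod_cast i.2)
  have hfibcard : ∀ k : ℕ, Fintype.card {b : {b // b ∈ P} // Finset.card b.1 = k} =
      Fintype.card {i : {i // i ∈ m.support} // m i.1 = k} := by
    intro k
    rw [← count_via_subtype P Finset.card k, ← count_via_subtype m.support ⇑m k]
    rw [show (m.support.val.map ⇑m) = exps m from rfl, h]
  have hGP : GP P m ≃ {e : {b // b ∈ P} ≃ {i // i ∈ m.support} //
      ∀ b, m ((e b) : {i // i ∈ m.support}).1 = Finset.card b.1} := Equiv.refl _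
  rw [Fintype.card_congr (hGP.trans (gradeEquiv _ _ K hf hg))]
  rw [Fintype.card_pi]
  have hfac : ∀ k : {k // k ∈ K},
      Fintype.card ({b : {b // b ∈ P} // Finset.card b.1 = (k:ℕ)} ≃
        {i : {i // i ∈ m.support} // m i.1 = (k:ℕ)}) = Nat.factorial (μ.count (k:ℕ)) := by
    intro k
    have hc := hfibcard (k : ℕ)
    rcases Fintype.card_eq.mp hc with ⟨w⟩
    rw [Fintype.card_equiv w, ← count_via_subtype P Finset.card (k:ℕ)]
  rw [Finset.prod_congr rfl (fun k _ => hfac k)]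
  rw [Finset.prod_coe_sort K (fun k => Nat.factorial (μ.count k))]
  rfl

lemma gp_empty {P : Finset (Finset V)} {m : ℕ →₀ ℕ}
    (h : exps m ≠ P.val.map Finset.card) : IsEmpty (GP P m) := by
  constructor
  intro e
  exact h (gp_type_eq e)

end CardGP

section Decomp
variable {V : Type} [Fintype V] [DecidableEq V]

noncomputable def stableF (G : SimpleGraph V) : Finset (Finset (Finset V)) :=
  Finset.univ.filter (fun P : Finset (Finset V) =>
    IsSetPartition P ∧ ∀ b ∈ P, ∀ x ∈ b, ∀ y ∈ b, ¬ G.Adj x y)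

def ColS (G : SimpleGraph V) (m : ℕ →₀ ℕ) :=
  {κ : V → ℕ // Proper G κ ∧ ∑ v, Finsupp.single (κ v) 1 = m}

noncomputable def equivSigma (G : SimpleGraph V) (m : ℕ →₀ ℕ) :
    ColS G m ≃ Σ P : {P // P ∈ stableF G}, SP P.1 m where
  toFun κ := by
    refine ⟨⟨fibersOf κ.1, ?_⟩, ⟨κ.1, rfl, κ.2.2⟩⟩
    rw [stableF, Finset.mem_filter]
    exact ⟨Finset.mem_univ _, fibersOf_isSetPartition κ.1, fibersOf_stable κ.2.1⟩
  invFun x := by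
    refine ⟨x.2.1, ?_, x.2.2.2⟩
    apply proper_of_fibers_stable (G := G)
    rw [x.2.2.1]
    exact ((Finset.mem_filter.mp x.1.2).2).2
  left_inv κ := rfl
  right_inv := by
    rintro ⟨⟨P, hP⟩, ⟨κ, hfib, hsum⟩⟩
    have hfib' : fibersOf κ = P := hfib
    subst hfib'
    rfl

end Decomp



def QCond (d : ℕ) (S : Finset ℕ) (m : ℕ →₀ ℕ) : Prop :=
  ∃ f : Fin d → ℕ, Monotone f ∧
    (∀ i j : Fin d, (j : ℕ) = (i : ℕ) + 1 → (j : ℕ) ∈ S → f i < f j) ∧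
    m = ∑ j, Finsupp.single (f j) 1

section Bij
variable {V : Type} [Fintype V] [DecidableEq V] {G : SimpleGraph V} {d : ℕ}

lemma mono_orient {κ : V → ℕ} (hproper : Proper G κ) {s : Fin d ≃ V}
    (hmono : Monotone fun i => κ (s i)) :
    ∀ x y, G.Adj x y → (s.symm x < s.symm y ↔ κ x < κ y) := by
  intro x y hxy
  constructor
  · intro hlt
    have h := hmono (le_of_lt hlt)
    simp only [Equiv.apply_symm_apply] at h
    exact lt_of_le_of_ne h (hproper x y hxy)
  · intro hκ
    by_contra hn
    push_neg at hn
    have h := hmono hn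
    simp only [Equiv.apply_symm_apply] at h
    omega

lemma alpha_eq (α : (Fin d ≃ V) → (V ≃ Fin d))
    (hcons : ∀ s s' : Fin d ≃ V,
      (∀ x y : V, G.Adj x y → (s.symm x < s.symm y ↔ s'.symm x < s'.symm y)) →
      α s = α s')
    {κ : V → ℕ} (hproper : Proper G κ) {s s' : Fin d ≃ V}
    (hm : Monotone fun i => κ (s i)) (hm' : Monotone fun i => κ (s' i)) : α s = α s' :=
  hcons s s' (fun x y hxy =>
    (mono_orient hproper hm x y hxy).trans (mono_orient hproper hm' x y hxy).symm)

lemma exists_descent {g : Fin d → Fin d} {i j : Fin d} (hij : i < j) (hg : g j < g i) :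
    ∃ k, ∃ hk : k < d, i.1 < k ∧ k ≤ j.1 ∧ g ⟨k, hk⟩ < g ⟨k - 1, by omega⟩ := by
  by_contra hno
  push_neg at hno
  have : g i ≤ g j := by
    apply chain_le g i j (le_of_lt hij)
    intro k hk hik hkj
    have := hno k hk hik hkj
    omega
  omega

lemma qcond_lt (α : (Fin d ≃ V) → (V ≃ Fin d))
    (hrev : ∀ s : Fin d ≃ V, ∀ a b : V, ltRel G s a b → α s b < α s a)
    {s : Fin d ≃ V} {f : Fin d → ℕ} (hmono : Monotone f)
    (hdesc : ∀ i j : Fin d, (j : ℕ) = (i : ℕ) + 1 →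
      (j : ℕ) ∈ descSet d (fun i => α s (s i)) → f i < f j)
    {i j : Fin d} (hij : i < j) (hadj : G.Adj (s i) (s j)) : f i < f j := by
  have hlt : ltRel G s (s i) (s j) := by
    apply Relation.TransGen.single
    constructor
    · exact hadj
    · simp only [Equiv.symm_apply_apply]; exact hij
  have hα : α s (s j) < α s (s i) := hrev s (s i) (s j) hlt
  rcases exists_descent (g := fun i => α s (s i)) hij hα with ⟨k, hk, hik, hkj, hdk⟩
  have hk1 : 1 ≤ k := by omega
  have hmem : k ∈ descSet d (fun i => α s (s i)) := by
    rw [descSet, Finset.mem_filter]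
    exact ⟨Finset.mem_Ico.mpr ⟨hk1, by omega⟩, ⟨by omega, hk, hdk⟩⟩
  have hstep : f ⟨k - 1, by omega⟩ < f ⟨k, hk⟩ := by
    apply hdesc ⟨k - 1, by omega⟩ ⟨k, hk⟩ _ hmem
    simp only [Fin.val_mk]; omega
  have h1 : f i ≤ f ⟨k - 1, by omega⟩ := hmono (by rw [Fin.le_def]; simp only [Fin.val_mk]; omega)
  have h2 : f ⟨k, hk⟩ ≤ f j := hmono (by rw [Fin.le_def]; simp only [Fin.val_mk]; omega)
  omega

lemma proper_of_qcond (α : (Fin d ≃ V) → (V ≃ Fin d))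
    (hrev : ∀ s : Fin d ≃ V, ∀ a b : V, ltRel G s a b → α s b < α s a)
    {s : Fin d ≃ V} {f : Fin d → ℕ} (hmono : Monotone f)
    (hdesc : ∀ i j : Fin d, (j : ℕ) = (i : ℕ) + 1 →
      (j : ℕ) ∈ descSet d (fun i => α s (s i)) → f i < f j) :
    Proper G (fun v => f (s.symm v)) := by
  intro x y hxy
  have hne : s.symm x ≠ s.symm y := by
    intro h
    exact G.ne_of_adj hxy (by rw [← Equiv.apply_symm_apply s x, ← Equiv.apply_symm_apply s y, h])
  have hxy' : G.Adj (s (s.symm x)) (s (s.symm y)) := by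
    simpa only [Equiv.apply_symm_apply] using hxy
  rcases lt_or_gt_of_ne hne with h | h
  · exact Nat.ne_of_lt (qcond_lt α hrev hmono hdesc h hxy')
  · exact (Nat.ne_of_lt (qcond_lt α hrev hmono hdesc h hxy'.symm)).symm

lemma key_injective (κ : V → ℕ) (β : V ≃ Fin d) :
    Function.Injective (fun v => d * κ v + ((β v : ℕ))) := by
  intro x y h
  dsimp only at h
  have := key_inj_parts (β x).2 (β y).2 h
  exact β.injective (Fin.ext this.2)

lemma mono_of_keySM {κ : V → ℕ} {β : V ≃ Fin d} {s : Fin d ≃ V}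
    (h : StrictMono fun i => d * κ (s i) + ((β (s i) : ℕ))) :
    Monotone fun i => κ (s i) := by
  intro i j hij
  show κ (s i) ≤ κ (s j)
  rcases eq_or_lt_of_le hij with heq | hlt
  · rw [heq]
  · have := h hlt
    dsimp only at this
    rcases key_le_cases (β (s i)).2 (β (s j)).2 this with h1 | ⟨h1, _⟩
    · omega
    · omega

end Bij

section Psi
variable {V : Type} [Fintype V] [DecidableEq V] {G : SimpleGraph V} {d : ℕ}

noncomputable def baseSeq (hd : Fintype.card V = d) (κ : V → ℕ) : Fin d ≃ V :=
  (exists_sortKey hd (fun v => d * κ v + ((Fintype.equivFinOfCardEq hd v : ℕ)))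
    (key_injective κ (Fintype.equivFinOfCardEq hd))).choose

lemma baseSeq_strictMono (hd : Fintype.card V = d) (κ : V → ℕ) :
    StrictMono fun i => d * κ (baseSeq hd κ i) +
      ((Fintype.equivFinOfCardEq hd (baseSeq hd κ i) : ℕ)) :=
  (exists_sortKey hd _ (key_injective κ (Fintype.equivFinOfCardEq hd))).choose_spec

noncomputable def psiBeta (hd : Fintype.card V = d) (α : (Fin d ≃ V) → (V ≃ Fin d))
    (κ : V → ℕ) : V ≃ Fin d := α (baseSeq hd κ)

noncomputable def psiSeq (hd : Fintype.card V = d) (α : (Fin d ≃ V) → (V ≃ Fin d))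
    (κ : V → ℕ) : Fin d ≃ V :=
  (exists_sortKey hd (fun v => d * κ v + ((psiBeta hd α κ v : ℕ)))
    (key_injective κ (psiBeta hd α κ))).choose

lemma psiSeq_strictMono (hd : Fintype.card V = d) (α : (Fin d ≃ V) → (V ≃ Fin d))
    (κ : V → ℕ) : StrictMono fun i => d * κ (psiSeq hd α κ i) +
      ((psiBeta hd α κ (psiSeq hd α κ i) : ℕ)) :=
  (exists_sortKey hd _ (key_injective κ (psiBeta hd α κ))).choose_spec

lemma psiSeq_mono (hd : Fintype.card V = d) (α : (Fin d ≃ V) → (V ≃ Fin d))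
    (κ : V → ℕ) : Monotone fun i => κ (psiSeq hd α κ i) :=
  mono_of_keySM (psiSeq_strictMono hd α κ)

lemma baseSeq_mono (hd : Fintype.card V = d) (κ : V → ℕ) :
    Monotone fun i => κ (baseSeq hd κ i) :=
  mono_of_keySM (baseSeq_strictMono hd κ)

/-- α of any κ-monotone sequencing equals psiBeta -/
lemma alpha_eq_psiBeta (hd : Fintype.card V = d) (α : (Fin d ≃ V) → (V ≃ Fin d))
    (hcons : ∀ s s' : Fin d ≃ V,
      (∀ x y : V, G.Adj x y → (s.symm x < s.symm y ↔ s'.symm x < s'.symm y)) →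
      α s = α s')
    {κ : V → ℕ} (hproper : Proper G κ) {s : Fin d ≃ V}
    (hm : Monotone fun i => κ (s i)) : α s = psiBeta hd α κ :=
  alpha_eq α hcons hproper hm (baseSeq_mono hd κ)

/-- QCond holds for psiSeq -/
lemma psiSeq_qcond (hd : Fintype.card V = d) (α : (Fin d ≃ V) → (V ≃ Fin d))
    (hcons : ∀ s s' : Fin d ≃ V,
      (∀ x y : V, G.Adj x y → (s.symm x < s.symm y ↔ s'.symm x < s'.symm y)) →
      α s = α s')
    {κ : V → ℕ} (hproper : Proper G κ) {m : ℕ →₀ ℕ}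
    (hsum : ∑ v, Finsupp.single (κ v) 1 = m) :
    QCond d (descSet d (fun i => α (psiSeq hd α κ) (psiSeq hd α κ i))) m := by
  set s := psiSeq hd α κ with hs
  set β := psiBeta hd α κ with hβ
  have hαs : α s = β := alpha_eq_psiBeta hd α hcons hproper (psiSeq_mono hd α κ)
  refine ⟨fun i => κ (s i), psiSeq_mono hd α κ, ?_, ?_⟩
  · intro i j hji hmem
    rw [descSet, Finset.mem_filter] at hmem
    rcases hmem.2 with ⟨h', h, hlt⟩
    have hj : (⟨(j:ℕ), h⟩ : Fin d) = j := Fin.ext rfl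
    have hi : (⟨(j:ℕ) - 1, h'⟩ : Fin d) = i := Fin.ext (by simp only [Fin.val_mk]; omega)
    rw [hj, hi, hαs] at hlt
    have hij : i < j := by rw [Fin.lt_def]; omega
    have hkey := psiSeq_strictMono hd α κ hij
    dsimp only at hkey
    rcases key_le_cases (β (s i)).2 (β (s j)).2 hkey with h1 | ⟨h1, h2⟩
    · exact h1
    · exfalso
      rw [Fin.lt_def] at hlt
      omega
  · rw [← hsum, ← Equiv.sum_comp s (fun v => Finsupp.single (κ v) 1)]

end Psi

section MainEquiv
variable {V : Type} [Fintype V] [DecidableEq V] {G : SimpleGraph V} {d : ℕ}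

noncomputable def equivSeq (hd : Fintype.card V = d) (α : (Fin d ≃ V) → (V ≃ Fin d))
    (hrev : ∀ s : Fin d ≃ V, ∀ a b : V, ltRel G s a b → α s b < α s a)
    (hcons : ∀ s s' : Fin d ≃ V,
      (∀ x y : V, G.Adj x y → (s.symm x < s.symm y ↔ s'.symm x < s'.symm y)) →
      α s = α s')
    (m : ℕ →₀ ℕ) :
    {s : Fin d ≃ V // QCond d (descSet d (fun i => α s (s i))) m} ≃ ColS G m where
  toFun sp := by
    refine ⟨fun v => sp.2.choose (sp.1.symm v), ?_, ?_⟩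
    · exact proper_of_qcond α hrev sp.2.choose_spec.1 sp.2.choose_spec.2.1
    · exact (Equiv.sum_comp sp.1.symm
        (fun j => Finsupp.single (sp.2.choose j) 1)).trans sp.2.choose_spec.2.2.symm
  invFun κ := ⟨psiSeq hd α κ.1, psiSeq_qcond hd α hcons κ.2.1 κ.2.2⟩
  left_inv sp := by
    obtain ⟨s, hc⟩ := sp
    apply Subtype.ext
    dsimp only
    set f := hc.choose with hf
    obtain ⟨hmono, hdesc, hsum⟩ := hc.choose_spec
    simp only [← hf] at hmono hdesc hsum
    set κ : V → ℕ := fun v => f (s.symm v) with hκ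
    have hκs : ∀ i, κ (s i) = f i := by
      intro i; rw [hκ]; simp only [Equiv.symm_apply_apply]
    have hproper : Proper G κ := proper_of_qcond α hrev hmono hdesc
    have hκmono : Monotone fun i => κ (s i) := by
      intro i j hij
      show κ (s i) ≤ κ (s j)
      rw [hκs, hκs]
      exact hmono hij
    set β := psiBeta hd α κ with hβ
    have hαs : α s = β := alpha_eq_psiBeta hd α hcons hproper hκmono
    have hsm : StrictMono fun i => d * κ (s i) + ((β (s i) : ℕ)) := by
      apply strictMono_fin_of_adj
      intro k hk
      set i₀ : Fin d := ⟨k, by omega⟩ with hi₀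
      set j₀ : Fin d := ⟨k+1, hk⟩ with hj₀
      show d * κ (s i₀) + ((β (s i₀)) : ℕ) < d * κ (s j₀) + ((β (s j₀)) : ℕ)
      have hff : f i₀ ≤ f j₀ := hmono (by rw [Fin.le_def]; simp only [hi₀, hj₀, Fin.val_mk]; omega)
      rcases eq_or_lt_of_le hff with heq | hlt
      · -- equal colors: β increases since not a descent
        have hnotdesc : (j₀ : ℕ) ∉ descSet d (fun i => α s (s i)) := by
          intro hmem
          have := hdesc i₀ j₀ (by simp only [hi₀, hj₀, Fin.val_mk]) hmem
          omega
        have hle : α s (s i₀) ≤ α s (s j₀) := by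
          by_contra hgt
          push_neg at hgt
          apply hnotdesc
          rw [descSet, Finset.mem_filter]
          refine ⟨Finset.mem_Ico.mpr ⟨by simp only [hj₀, Fin.val_mk]; omega,
              by simp only [hj₀, Fin.val_mk]; omega⟩,
            ⟨by simp only [hj₀, Fin.val_mk]; omega, by simp only [hj₀, Fin.val_mk]; omega, ?_⟩⟩
          have e1 : (⟨(j₀:ℕ), by simp only [hj₀, Fin.val_mk]; omega⟩ : Fin d) = j₀ :=
            Fin.ext rfl
          have e2 : (⟨(j₀:ℕ) - 1, by simp only [hj₀, Fin.val_mk]; omega⟩ : Fin d) = i₀ :=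
            Fin.ext (by simp only [hi₀, hj₀, Fin.val_mk]; omega)
          simp only [e1, e2]
          exact hgt
        have hne : α s (s i₀) ≠ α s (s j₀) := by
          intro h
          have : s i₀ = s j₀ := (α s).injective h
          have : i₀ = j₀ := s.injective this
          simp only [hi₀, hj₀] at this
          exact absurd (congrArg Fin.val this) (by simp only [Fin.val_mk]; omega)
        have hβlt : (β (s i₀) : ℕ) < (β (s j₀) : ℕ) := by
          rw [← hαs]
          exact Fin.lt_def.mp (lt_of_le_of_ne hle hne)
        rw [hκs, hκs, ← heq]
        omega
      · apply key_step_lt (β (s i₀)).2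
        rw [hκs, hκs]
        exact hlt
    exact sortKey_unique _ (key_injective κ β) _ s (psiSeq_strictMono hd α κ) hsm
  right_inv κc := by
    apply Subtype.ext
    dsimp only
    set s := psiSeq hd α κc.1 with hs
    set hq := psiSeq_qcond hd α hcons κc.2.1 κc.2.2 with hhq
    have hf : hq.choose = fun i => κc.1 (s i) := by
      apply monotone_unique hq.choose_spec.1 (psiSeq_mono hd α κc.1)
      rw [← hq.choose_spec.2.2]
      rw [Equiv.sum_comp s (fun v => Finsupp.single (κc.1 v) 1)]
      exact κc.2.2.symm
    funext v
    rw [hf]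
    simp only [hs, Equiv.apply_symm_apply]

end MainEquiv


/-- Stanley's theorem: if to each sequencing `s` of `G` is associated an order-reversing
labelling `α_s` of `ō(s)`, consistently on sequencings inducing the same acyclic
orientation, then `X_G = Σ_s Q_{D(α_s,s),d}`, over all sequencings `s`. -/
theorem stmt12 {V : Type} [Fintype V] [DecidableEq V] (G : SimpleGraph V) (d : ℕ)
    (hd : Fintype.card V = d)
    (α : (Fin d ≃ V) → (V ≃ Fin d))
    (hrev : ∀ s : Fin d ≃ V, ∀ a b : V, ltRel G s a b → α s b < α s a)
    (hcons : ∀ s s' : Fin d ≃ V,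
      (∀ x y : V, G.Adj x y → (s.symm x < s.symm y ↔ s'.symm x < s'.symm y)) →
      α s = α s') :
    XG G = ∑ s : Fin d ≃ V, Qfun d (descSet d (fun i => α s (s i))) := by
  classical
  funext m
  have hQ : ∀ s : Fin d ≃ V, Qfun d (descSet d (fun i => α s (s i))) m
      = if QCond d (descSet d (fun i => α s (s i))) m then (1:ℚ) else 0 := fun s => rfl
  have hsum_apply : (∑ s : Fin d ≃ V, Qfun d (descSet d (fun i => α s (s i)))) m
      = ∑ s : Fin d ≃ V, Qfun d (descSet d (fun i => α s (s i))) m :=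
    map_sum (MvPowerSeries.coeff m) _ Finset.univ
  have hXG : XG G m = ∑ P ∈ stableF G, mAug (P.val.map Finset.card) m :=
    map_sum (MvPowerSeries.coeff m) _ (stableF G)
  have hmAug : ∀ μ : Multiset ℕ, (mAug μ) m = if exps m = μ then (rFact μ : ℚ) else 0 := by
    intro μ
    have h1 : (mAug μ) m = (rFact μ : ℚ) * (mMul μ) m := rfl
    rw [h1, show (mMul μ) m = if m.support.val.map ⇑m = μ then (1:ℚ) else 0 from rfl,
      mul_ite, mul_one, mul_zero]
    rfl
  have hP' : ∀ P : {P // P ∈ stableF G}, IsSetPartition P.1 :=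
    fun P => ((Finset.mem_filter.mp P.2).2).1
  have E : {s : Fin d ≃ V // QCond d (descSet d (fun i => α s (s i))) m} ≃
      Σ P : {P // P ∈ stableF G}, GP P.1 m :=
    (equivSeq hd α hrev hcons m).trans ((equivSigma G m).trans
      (Equiv.sigmaCongrRight (fun P => (equivSP (hP' P) m).trans (equivInj (hP' P) m))))
  have hcount : Fintype.card {s : Fin d ≃ V // QCond d (descSet d (fun i => α s (s i))) m}
      = ∑ P ∈ stableF G,
        (if exps m = P.val.map Finset.card then rFact (P.val.map Finset.card) else 0) := by
    rw [Fintype.card_congr E, Fintype.card_sigma]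
    rw [← Finset.sum_coe_sort (stableF G)
      (fun P => if exps m = P.val.map Finset.card then rFact (P.val.map Finset.card) else 0)]
    apply Finset.sum_congr rfl
    intro P _
    by_cases h : exps m = P.1.val.map Finset.card
    · rw [if_pos h, gp_card h]
    · rw [if_neg h, Fintype.card_eq_zero_iff.mpr (gp_empty h)]
  calc XG G m
      = ∑ P ∈ stableF G, mAug (P.val.map Finset.card) m := hXG
    _ = ∑ P ∈ stableF G,
          (if exps m = P.val.map Finset.card then (rFact (P.val.map Finset.card) : ℚ) else 0) :=
        Finset.sum_congr rfl (fun P _ => hmAug _)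
    _ = ((∑ P ∈ stableF G,
          if exps m = P.val.map Finset.card then rFact (P.val.map Finset.card) else 0 : ℕ) : ℚ) := by
        rw [Nat.cast_sum]
        apply Finset.sum_congr rfl
        intro P _
        rw [Nat.cast_ite, Nat.cast_zero]
    _ = (Fintype.card {s : Fin d ≃ V // QCond d (descSet d (fun i => α s (s i))) m} : ℚ) := by
        rw [hcount]
    _ = (((Finset.univ.filter
          (fun s : Fin d ≃ V => QCond d (descSet d (fun i => α s (s i))) m)).card : ℕ) : ℚ) := by
        rw [Fintype.card_subtype]
    _ = ∑ s : Fin d ≃ V,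
          (if QCond d (descSet d (fun i => α s (s i))) m then (1:ℚ) else 0) :=
        (Finset.sum_boole _ _).symm
    _ = ∑ s : Fin d ≃ V, Qfun d (descSet d (fun i => α s (s i))) m :=
        Finset.sum_congr rfl (fun s _ => (hQ s).symm)
    _ = (∑ s : Fin d ≃ V, Qfun d (descSet d (fun i => α s (s i)))) m := hsum_apply.symm
end

section
/- Let P be a poset with d vertices. Then the chromatic symmetric function of the incomparability graph of P satisfies X_{inc(P)} = Σ_s Q_{D(s),d}, summed over all bijections s : {1,...,d} → P, where D(s) = { i ∈ {1,...,d-1} : s(i) ≮ s(i+1) in P }. -/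
open scoped Classical

/-- The incomparability graph of a poset: vertices adjacent iff incomparable. -/
def incGraph (V : Type) [PartialOrder V] : SimpleGraph V where
  Adj a b := ¬ a ≤ b ∧ ¬ b ≤ a
  symm := ⟨fun a b h => ⟨h.2, h.1⟩⟩
  loopless := ⟨fun a h => h.1 le_rfl⟩


open Finset


section AuxGeneral

lemma sum_single_apply {d : ℕ} (f : Fin d → ℕ) (k : ℕ) :
    (∑ j, Finsupp.single (f j) (1 : ℕ)) k = (univ.filter fun j => f j = k).card := by
  rw [Finset.sum_apply', Finset.card_filter]
  refine Finset.sum_congr rfl fun j _ => ?_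
  rw [Finsupp.single_apply]

lemma mono_le_iff {d : ℕ} {f : Fin d → ℕ} (hf : Monotone f) (j : Fin d) (k : ℕ) :
    f j ≤ k ↔ (j : ℕ) < (univ.filter fun i => f i ≤ k).card := by
  constructor
  · intro h
    have hsub : (univ.filter fun i : Fin d => i ≤ j) ⊆ univ.filter fun i => f i ≤ k := by
      intro i hi
      simp only [mem_filter, mem_univ, true_and] at hi ⊢
      exact le_trans (hf hi) h
    have := Finset.card_le_card hsub
    rw [show (univ.filter fun i : Fin d => i ≤ j) = Finset.Iic j by ext i; simp,
      Fin.card_Iic] at this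
    omega
  · intro h
    by_contra hc
    push_neg at hc
    have hsub : (univ.filter fun i : Fin d => f i ≤ k) ⊆ univ.filter fun i => i < j := by
      intro i hi
      simp only [mem_filter, mem_univ, true_and] at hi ⊢
      by_contra hij
      push_neg at hij
      exact absurd (le_trans (hf hij) hi) (by omega)
    have := Finset.card_le_card hsub
    rw [show (univ.filter fun i : Fin d => i < j) = Finset.Iio j by ext i; simp,
      Fin.card_Iio] at this
    omega

lemma nle_eq_sum {d : ℕ} (f : Fin d → ℕ) (k : ℕ) :
    (univ.filter fun i : Fin d => f i ≤ k).card
      = ∑ k' ∈ Finset.Iic k, (univ.filter fun i => f i = k').card := by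
  rw [Finset.card_eq_sum_card_fiberwise (f := f) (t := Finset.Iic k)
    (fun i hi => by simpa using hi)]
  refine Finset.sum_congr rfl fun k' hk' => ?_
  congr 1
  ext i
  simp only [mem_filter, mem_univ, true_and, Finset.mem_Iic] at hk' ⊢
  constructor
  · rintro ⟨-, h⟩; exact h
  · intro h; exact ⟨h ▸ hk', h⟩

lemma mono_eq_of_counts {d : ℕ} {f g : Fin d → ℕ} (hf : Monotone f) (hg : Monotone g)
    (h : ∀ k, (univ.filter fun i => f i = k).card = (univ.filter fun i => g i = k).card) :
    f = g := by
  have hnle : ∀ k, (univ.filter fun i : Fin d => f i ≤ k).card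
      = (univ.filter fun i : Fin d => g i ≤ k).card := by
    intro k
    rw [nle_eq_sum, nle_eq_sum]
    exact Finset.sum_congr rfl fun k' _ => h k'
  funext j
  have h1 : f j ≤ g j := by
    rw [mono_le_iff hf, hnle]
    exact (mono_le_iff hg j (g j)).mp le_rfl
  have h2 : g j ≤ f j := by
    rw [mono_le_iff hg, ← hnle]
    exact (mono_le_iff hf j (f j)).mp le_rfl
  exact le_antisymm h1 h2

end AuxGeneral


lemma card_filter_ne {α : Type} [Fintype α] [DecidableEq α] (a₀ : α) (p : α → Prop) [DecidablePred p] :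
    (univ.filter fun x : {x : α // x ≠ a₀} => p ↑x).card = ((univ.filter p).erase a₀).card := by
  refine Finset.card_bij (fun x _ => ↑x) ?_ ?_ ?_
  · intro x hx
    simp only [mem_filter, mem_univ, true_and] at hx
    simp only [Finset.mem_erase, mem_filter, mem_univ, true_and]
    exact ⟨x.2, hx⟩
  · intro x _ y _ h
    exact Subtype.ext h
  · intro y hy
    simp only [Finset.mem_erase, mem_filter, mem_univ, true_and] at hy
    exact ⟨⟨y, hy.1⟩, by simp [hy.2], rfl⟩

lemma card_erase_ite {α : Type} [Fintype α] [DecidableEq α] (a₀ : α) (p : α → Prop) [DecidablePred p] :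
    ((univ.filter p).erase a₀).card = (univ.filter p).card - (if p a₀ then 1 else 0) := by
  by_cases h : p a₀
  · rw [if_pos h, Finset.card_erase_of_mem (by simp [h])]
  · rw [if_neg h, Finset.erase_eq_of_notMem (by simp [h])]; omega

lemma finset_erase_card_ite (B : Finset ℕ) (b : ℕ) (hb : b ∈ B) (p : ℕ → Prop) [DecidablePred p] :
    ((B.erase b).filter p).card = (B.filter p).card - (if p b then 1 else 0) := by
  rw [show (B.erase b).filter p = (B.filter p).erase b by
    ext k; simp only [Finset.mem_erase, mem_filter]; tauto]
  by_cases h : p b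
  · rw [if_pos h, Finset.card_erase_of_mem (by simp [hb, h])]
  · rw [if_neg h, Finset.erase_eq_of_notMem (by simp [h])]; omega

lemma keycount : ∀ (n : ℕ) {α : Type} [Fintype α] [DecidableEq α] (u : α → ℕ)
    (B : Finset ℕ) (v : ℕ → ℕ), Fintype.card α = n →
    (∀ i, (univ.filter fun a => u a = i).card = (B.filter fun k => v k = i).card) →
    ((Fintype.piFinset fun _ : α => B).filter fun g =>
        Function.Injective g ∧ ∀ a, v (g a) = u a).card
      = ∏ i ∈ univ.image u, Nat.factorial ((univ.filter fun a => u a = i).card) := by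
  intro n
  induction n with
  | zero =>
    intro α _ _ u B v hn h
    have hE : IsEmpty α := Fintype.card_eq_zero_iff.mp hn
    rw [Finset.filter_true_of_mem (fun g _ => ⟨fun a => isEmptyElim a, fun a => isEmptyElim a⟩)]
    rw [Fintype.card_piFinset]
    simp [Finset.univ_eq_empty]
  | succ n IH =>
    intro α _ _ u B v hn h
    have hne : Nonempty α := Fintype.card_pos_iff.mp (by omega)
    obtain ⟨a₀⟩ := hne
    set A := (Fintype.piFinset fun _ : α => B).filter fun g =>
        Function.Injective g ∧ ∀ a, v (g a) = u a with hA
    have hmapsto : ∀ g ∈ A, g a₀ ∈ B := by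
      intro g hg
      rw [hA, mem_filter, Fintype.mem_piFinset] at hg
      exact hg.1 a₀
    rw [Finset.card_eq_sum_card_fiberwise hmapsto]
    have hzero : ∀ b ∈ B, ¬ (v b = u a₀) → (A.filter fun g => g a₀ = b).card = 0 := by
      intro b _ hvb
      rw [Finset.card_eq_zero, Finset.filter_eq_empty_iff]
      intro g hg
      rw [hA, mem_filter] at hg
      exact fun hgb => hvb (by rw [← hgb]; exact hg.2.2 a₀)
    have hfiber : ∀ b ∈ B, v b = u a₀ →
        (A.filter fun g => g a₀ = b).card
          = ((Fintype.piFinset fun _ : {x : α // x ≠ a₀} => B.erase b).filter fun g' =>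
              Function.Injective g' ∧ ∀ x : {x : α // x ≠ a₀}, v (g' x) = u ↑x).card := by
      intro b hbB hvb
      refine Finset.card_bij' (fun g _ => fun x : {x : α // x ≠ a₀} => g ↑x)
        (fun g' _ => fun x : α => if hx : x = a₀ then b else g' ⟨x, hx⟩) ?_ ?_ ?_ ?_
      · intro g hg
        rw [mem_filter] at hg
        obtain ⟨hgA, hga₀⟩ := hg
        rw [hA, mem_filter, Fintype.mem_piFinset] at hgA
        obtain ⟨hgB, hginj, hgw⟩ := hgA
        rw [mem_filter, Fintype.mem_piFinset]
        refine ⟨fun x => Finset.mem_erase.mpr ⟨fun hc => x.2 (hginj (hc.trans hga₀.symm)), hgB ↑x⟩,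
          fun x y hxy => Subtype.ext (hginj hxy), fun x => hgw ↑x⟩
      · intro g' hg'
        rw [mem_filter, Fintype.mem_piFinset] at hg'
        obtain ⟨hg'B, hg'inj, hg'w⟩ := hg'
        rw [mem_filter, hA, mem_filter, Fintype.mem_piFinset]
        refine ⟨⟨?_, ?_, ?_⟩, by simp⟩
        · intro x
          by_cases hx : x = a₀
          · simpa [hx] using hbB
          · simpa [hx] using Finset.mem_of_mem_erase (hg'B ⟨x, hx⟩)
        · intro x y hxy
          dsimp only at hxy
          by_cases hx : x = a₀ <;> by_cases hy : y = a₀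
          · rw [hx, hy]
          · rw [dif_pos hx, dif_neg hy] at hxy
            exact absurd hxy.symm (Finset.ne_of_mem_erase (hg'B ⟨y, hy⟩))
          · rw [dif_neg hx, dif_pos hy] at hxy
            exact absurd hxy (Finset.ne_of_mem_erase (hg'B ⟨x, hx⟩))
          · rw [dif_neg hx, dif_neg hy] at hxy
            exact congrArg Subtype.val (hg'inj hxy)
        · intro x
          dsimp only
          by_cases hx : x = a₀
          · rw [hx, dif_pos rfl, hvb]
          · rw [dif_neg hx]; exact hg'w ⟨x, hx⟩
      · intro g hg
        rw [mem_filter] at hg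
        funext x
        dsimp only
        by_cases hx : x = a₀
        · subst hx
          rw [dif_pos rfl]
          exact hg.2.symm
        · rw [dif_neg hx]
      · intro g' _
        funext x
        dsimp only
        rw [dif_neg x.2]
    have hcnt_pos : 0 < (univ.filter fun a => u a = u a₀).card :=
      Finset.card_pos.mpr ⟨a₀, by simp⟩
    have hcnt' : ∀ i, (univ.filter fun x : {x : α // x ≠ a₀} => u ↑x = i).card
        = (univ.filter fun a => u a = i).card - (if u a₀ = i then 1 else 0) := by
      intro i
      rw [card_filter_ne a₀ (fun x => u x = i), card_erase_ite]
    set K := ∏ i ∈ univ.image (fun x : {x : α // x ≠ a₀} => u ↑x),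
        Nat.factorial ((univ.filter fun x : {x : α // x ≠ a₀} => u ↑x = i).card) with hK
    have key : ∀ b ∈ B, v b = u a₀ → (A.filter fun g => g a₀ = b).card = K := by
      intro b hbB hvb
      rw [hfiber b hbB hvb, hK]
      refine IH (fun x : {x : α // x ≠ a₀} => u ↑x) (B.erase b) v ?_ ?_
      · have : Fintype.card {x : α // x ≠ a₀} = Fintype.card α - 1 := by
          simp [Fintype.card_subtype_compl]
        omega
      · intro i
        rw [hcnt', finset_erase_card_ite B b hbB, ← h i, hvb]
    rw [← Finset.sum_filter_add_sum_filter_not B (fun b => v b = u a₀)]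
    have h2 : ∑ b ∈ B.filter fun b => ¬ (v b = u a₀), (A.filter fun g => g a₀ = b).card = 0 := by
      refine Finset.sum_eq_zero fun b hb => ?_
      rw [mem_filter] at hb
      exact hzero b hb.1 hb.2
    rw [h2, add_zero]
    have h3 : ∑ b ∈ B.filter (fun b => v b = u a₀), (A.filter fun g => g a₀ = b).card
        = ∑ _b ∈ B.filter (fun b => v b = u a₀), K :=
      Finset.sum_congr rfl (fun b hb => key b (mem_filter.mp hb).1 (mem_filter.mp hb).2)
    have hcard : (B.filter fun b => v b = u a₀).card = (univ.filter fun a => u a = u a₀).card :=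
      (h (u a₀)).symm
    rw [h3, Finset.sum_const, smul_eq_mul, hcard]
    have hmem : u a₀ ∈ univ.image u := Finset.mem_image_of_mem u (mem_univ a₀)
    have claim1 : (univ.image (fun x : {x : α // x ≠ a₀} => u ↑x)).erase (u a₀)
        = (univ.image u).erase (u a₀) := by
      ext i
      simp only [Finset.mem_erase, Finset.mem_image, mem_univ, true_and]
      constructor
      · rintro ⟨hne, x, hx⟩; exact ⟨hne, ↑x, hx⟩
      · rintro ⟨hne, x, hx⟩
        exact ⟨hne, ⟨x, fun hc => hne (by rw [← hx, hc])⟩, hx⟩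
    have claim2 : ∀ i ∈ (univ.image u).erase (u a₀),
        (univ.filter fun x : {x : α // x ≠ a₀} => u ↑x = i).card
          = (univ.filter fun a => u a = i).card := by
      intro i hi
      have h' := hcnt' i
      have hne2 : ¬ (u a₀ = i) := fun hc => (Finset.mem_erase.mp hi).1 hc.symm
      rw [if_neg hne2] at h'
      rw [Nat.sub_zero] at h'
      exact h'
    have claim3 : K = Nat.factorial ((univ.filter fun a => u a = u a₀).card - 1)
        * ∏ i ∈ (univ.image u).erase (u a₀),
            Nat.factorial ((univ.filter fun x : {x : α // x ≠ a₀} => u ↑x = i).card) := by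
      rw [hK, ← claim1]
      by_cases hmem' : u a₀ ∈ univ.image (fun x : {x : α // x ≠ a₀} => u ↑x)
      · rw [← Finset.mul_prod_erase _ _ hmem']
        congr 1
        rw [hcnt' (u a₀), if_pos rfl]
      · rw [Finset.erase_eq_of_notMem hmem']
        have hz : (univ.filter fun x : {x : α // x ≠ a₀} => u ↑x = u a₀).card = 0 := by
          rw [Finset.card_eq_zero, Finset.filter_eq_empty_iff]
          intro x _
          exact fun hc => hmem' (Finset.mem_image.mpr ⟨x, mem_univ x, hc⟩)
        have h5 := hcnt' (u a₀)
        rw [if_pos rfl, hz] at h5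
        rw [show (univ.filter fun a => u a = u a₀).card - 1 = 0 from h5.symm]
        simp
    rw [claim3, Finset.prod_congr (rfl : (univ.image u).erase (u a₀) = (univ.image u).erase (u a₀))
      (fun i hi => congrArg Nat.factorial (claim2 i hi)), ← mul_assoc,
      Nat.mul_factorial_pred hcnt_pos.ne',
      ← Finset.mul_prod_erase (univ.image u)
        (fun i => Nat.factorial ((univ.filter fun a => u a = i).card)) hmem]

section StepB
variable {V : Type} [Fintype V] [DecidableEq V] [PartialOrder V]

def Valid (m : ℕ →₀ ℕ) {d : ℕ} (s : Fin d ≃ V) : Prop :=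
  ∃ f : Fin d → ℕ, Monotone f ∧
    (∀ i j : Fin d, (j : ℕ) = (i : ℕ) + 1 → ¬ s i < s j → f i < f j) ∧
    m = ∑ j, Finsupp.single (f j) 1

def properc (c : V → ℕ) : Prop := ∀ x y : V, c x = c y → x ≤ y ∨ y ≤ x

noncomputable def Cfin (m : ℕ →₀ ℕ) : Finset (V → ℕ) :=
  (Fintype.piFinset fun _ : V => m.support).filter fun c =>
    properc c ∧ ∀ k, (univ.filter fun x => c x = k).card = m k

lemma valid_chain {d : ℕ} {s : Fin d ≃ V} {f : Fin d → ℕ} (hf : Monotone f)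
    (hdesc : ∀ i j : Fin d, (j : ℕ) = (i : ℕ) + 1 → ¬ s i < s j → f i < f j) :
    ∀ (n : ℕ) (i j : Fin d), (j : ℕ) = (i : ℕ) + n → f i = f j → s i ≤ s j := by
  intro n
  induction n with
  | zero =>
    intro i j hj _
    have : i = j := Fin.ext (by omega)
    rw [this]
  | succ n IH =>
    intro i j hj hfij
    have hnd : (i : ℕ) + n < d := by have := j.isLt; omega
    have h1 : f i ≤ f ⟨(i : ℕ) + n, hnd⟩ := hf (by rw [Fin.le_def]; simp)
    have h2 : f ⟨(i : ℕ) + n, hnd⟩ ≤ f j := hf (by rw [Fin.le_def]; simp; omega)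
    have e1 : f i = f ⟨(i : ℕ) + n, hnd⟩ := by omega
    have e2 : f ⟨(i : ℕ) + n, hnd⟩ = f j := by omega
    have hlt : s ⟨(i : ℕ) + n, hnd⟩ < s j := by
      by_contra hc
      have := hdesc ⟨(i : ℕ) + n, hnd⟩ j (by simp; omega) hc
      omega
    exact le_trans (IH i ⟨(i : ℕ) + n, hnd⟩ rfl e1) hlt.le

lemma valid_chain' {d : ℕ} {s : Fin d ≃ V} {f : Fin d → ℕ} (hf : Monotone f)
    (hdesc : ∀ i j : Fin d, (j : ℕ) = (i : ℕ) + 1 → ¬ s i < s j → f i < f j)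
    {i j : Fin d} (hij : i ≤ j) (hfij : f i = f j) : s i ≤ s j :=
  valid_chain hf hdesc ((j : ℕ) - (i : ℕ)) i j (by rw [Fin.le_def] at hij; omega) hfij

def cltR (c : V → ℕ) (x y : V) : Prop := c x < c y ∨ (c x = c y ∧ x < y)

lemma cltR_trans {c : V → ℕ} {x y z : V} (h1 : cltR c x y) (h2 : cltR c y z) : cltR c x z := by
  rcases h1 with h1 | ⟨h1, h1'⟩ <;> rcases h2 with h2 | ⟨h2, h2'⟩
  · exact Or.inl (h1.trans h2)
  · exact Or.inl (h2 ▸ h1)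
  · exact Or.inl (h1 ▸ h2)
  · exact Or.inr ⟨h1.trans h2, h1'.trans h2'⟩

lemma cltR_irrefl {c : V → ℕ} (x : V) : ¬ cltR c x x := by
  rintro (h | ⟨-, h⟩)
  · exact lt_irrefl _ h
  · exact lt_irrefl _ h

lemma cltR_trichot {c : V → ℕ} (hp : properc c) {x y : V} (hxy : x ≠ y) :
    cltR c x y ∨ cltR c y x := by
  rcases lt_trichotomy (c x) (c y) with h | h | h
  · exact Or.inl (Or.inl h)
  · rcases hp x y h with hle | hle
    · exact Or.inl (Or.inr ⟨h, lt_of_le_of_ne hle hxy⟩)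
    · exact Or.inr (Or.inr ⟨h.symm, lt_of_le_of_ne hle hxy.symm⟩)
  · exact Or.inr (Or.inl h)

noncomputable def rankc (c : V → ℕ) (x : V) : ℕ := (univ.filter fun y => cltR c y x).card

lemma rankc_lt (c : V → ℕ) (x : V) : rankc c x < Fintype.card V := by
  have : (univ.filter fun y => cltR c y x) ⊂ univ := by
    refine Finset.ssubset_iff_of_subset (Finset.subset_univ _) |>.mpr
      ⟨x, mem_univ x, by simp [cltR_irrefl]⟩
  have h2 := Finset.card_lt_card this
  rw [Finset.card_univ] at h2
  exact h2

lemma rankc_strictMono {c : V → ℕ} {x y : V} (h : cltR c x y) : rankc c x < rankc c y := by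
  refine Finset.card_lt_card (Finset.ssubset_iff_of_subset ?_ |>.mpr ⟨x, ?_, ?_⟩)
  · intro z hz
    simp only [mem_filter, mem_univ, true_and] at hz ⊢
    exact cltR_trans hz h
  · simp only [mem_filter, mem_univ, true_and]
    exact h
  · simp [cltR_irrefl]

lemma rankc_inj {c : V → ℕ} (hp : properc c) : Function.Injective (rankc c) := by
  intro x y hxy
  by_contra hne
  rcases cltR_trichot hp hne with h | h
  · exact absurd hxy (Nat.ne_of_lt (rankc_strictMono h))
  · exact absurd hxy.symm (Nat.ne_of_lt (rankc_strictMono h))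

noncomputable def rankE (c : V → ℕ) {d : ℕ} (hd : Fintype.card V = d) : V → Fin d :=
  fun x => ⟨rankc c x, hd ▸ rankc_lt c x⟩

lemma rankE_bij {c : V → ℕ} (hp : properc c) {d : ℕ} (hd : Fintype.card V = d) :
    Function.Bijective (rankE c hd) := by
  rw [Fintype.bijective_iff_injective_and_card]
  exact ⟨fun x y hxy => rankc_inj hp (congrArg Fin.val hxy), by simp [hd]⟩

noncomputable def seqOf {c : V → ℕ} (hp : properc c) {d : ℕ} (hd : Fintype.card V = d) :
    Fin d ≃ V := (Equiv.ofBijective (rankE c hd) (rankE_bij hp hd)).symm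

lemma seqOf_rank {c : V → ℕ} (hp : properc c) {d : ℕ} (hd : Fintype.card V = d) (i : Fin d) :
    rankE c hd (seqOf hp hd i) = i := by
  exact (Equiv.ofBijective (rankE c hd) (rankE_bij hp hd)).apply_symm_apply i

lemma seqOf_clt {c : V → ℕ} (hp : properc c) {d : ℕ} (hd : Fintype.card V = d)
    {i j : Fin d} (hij : i < j) : cltR c (seqOf hp hd i) (seqOf hp hd j) := by
  have hne : seqOf hp hd i ≠ seqOf hp hd j := fun hc => absurd (Equiv.injective _ hc)
    (by exact fun h => absurd (h ▸ hij) (lt_irrefl _))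
  rcases cltR_trichot hp hne with h | h
  · exact h
  · exfalso
    have := rankc_strictMono h
    have e1 := congrArg Fin.val (seqOf_rank hp hd i)
    have e2 := congrArg Fin.val (seqOf_rank hp hd j)
    simp only [rankE] at e1 e2
    rw [Fin.lt_def] at hij
    omega

end StepB
section StepB2
variable {V : Type} [Fintype V] [DecidableEq V] [PartialOrder V]

lemma card_filter_equiv {α β : Type} [Fintype α] [Fintype β] (e : α ≃ β) (p : β → Prop) [DecidablePred p] :
    (univ.filter fun a => p (e a)).card = (univ.filter p).card := by
  refine Finset.card_bij (fun a _ => e a) ?_ ?_ ?_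
  · intro a ha
    simp only [mem_filter, mem_univ, true_and] at ha ⊢
    exact ha
  · intro a _ b _ h
    exact e.injective h
  · intro x hx
    simp only [mem_filter, mem_univ, true_and] at hx
    exact ⟨e.symm x, by simp [hx], by simp⟩

lemma seqOf_mono {c : V → ℕ} (hp : properc c) {d : ℕ}
    (hd : Fintype.card V = d) : Monotone fun i => c (seqOf hp hd i) := by
  intro i j hij
  rcases lt_or_eq_of_le hij with h | h
  · rcases seqOf_clt hp hd h with h' | ⟨h', -⟩
    · exact h'.le
    · exact h'.le
  · rw [h]

lemma seqOf_desc {c : V → ℕ} (hp : properc c) {d : ℕ} (hd : Fintype.card V = d) :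
    ∀ i j : Fin d, (j : ℕ) = (i : ℕ) + 1 → ¬ seqOf hp hd i < seqOf hp hd j →
      c (seqOf hp hd i) < c (seqOf hp hd j) := by
  intro i j hji hnlt
  have hij : i < j := by rw [Fin.lt_def]; omega
  rcases seqOf_clt hp hd hij with h | ⟨-, h⟩
  · exact h
  · exact absurd h hnlt

lemma seqOf_sum {m : ℕ →₀ ℕ} {c : V → ℕ} (hc : c ∈ Cfin m) {d : ℕ}
    (hd : Fintype.card V = d) (hp : properc c) :
    m = ∑ j, Finsupp.single (c (seqOf hp hd j)) 1 := by
  rw [Cfin, mem_filter] at hc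
  ext k
  have h1 := sum_single_apply (fun j => c (seqOf hp hd j)) k
  have h2 := card_filter_equiv (seqOf hp hd) (fun x => c x = k)
  have h3 := hc.2.2 k
  exact h3.symm.trans (h2.symm.trans h1.symm)

lemma seqOf_valid {m : ℕ →₀ ℕ} {c : V → ℕ} (hc : c ∈ Cfin m) {d : ℕ}
    (hd : Fintype.card V = d) (hp : properc c) : Valid m (seqOf hp hd) :=
  ⟨fun i => c (seqOf hp hd i), seqOf_mono hp hd, seqOf_desc hp hd, seqOf_sum hc hd hp⟩

lemma valid_coloring_proper {d : ℕ} {s : Fin d ≃ V} {f : Fin d → ℕ}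
    (hf : Monotone f)
    (hdesc : ∀ i j : Fin d, (j : ℕ) = (i : ℕ) + 1 → ¬ s i < s j → f i < f j) :
    properc (fun x => f (s.symm x)) := by
  intro x y hxy
  rcases le_total (s.symm x) (s.symm y) with h | h
  · left
    have := valid_chain' hf hdesc h hxy
    simpa using this
  · right
    have := valid_chain' hf hdesc h (id hxy.symm : f (s.symm y) = f (s.symm x))
    simpa using this

lemma valid_rank {d : ℕ} {s : Fin d ≃ V} {f : Fin d → ℕ}
    (hf : Monotone f)
    (hdesc : ∀ i j : Fin d, (j : ℕ) = (i : ℕ) + 1 → ¬ s i < s j → f i < f j)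
    (x : V) : rankc (fun y => f (s.symm y)) x = (s.symm x : ℕ) := by
  have hp : properc (fun y : V => f (s.symm y)) := valid_coloring_proper hf hdesc
  have hiff : ∀ y : V, cltR (fun y : V => f (s.symm y)) y x ↔ s.symm y < s.symm x := by
    intro y
    constructor
    · rintro (h | ⟨h, h'⟩)
      · by_contra hc
        push_neg at hc
        exact absurd (hf hc) (not_le.mpr h)
      · by_contra hc
        push_neg at hc
        have := valid_chain' hf hdesc hc (id h.symm : f (s.symm x) = f (s.symm y))
        simp only [Equiv.apply_symm_apply] at this
        exact absurd (h'.trans_le this) (lt_irrefl _)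
    · intro h
      have hne : y ≠ x := by
        intro hc
        rw [hc] at h
        exact lt_irrefl _ h
      rcases cltR_trichot hp hne with h' | h'
      · exact h'
      · exfalso
        rcases h' with h'' | ⟨h'', h'''⟩
        · exact absurd (hf h.le) (not_le.mpr h'')
        · have := valid_chain' hf hdesc h.le (id h''.symm : f (s.symm y) = f (s.symm x))
          simp only [Equiv.apply_symm_apply] at this
          exact absurd (h'''.trans_le this) (lt_irrefl _)
  have hset : (univ.filter fun y : V => cltR (fun y : V => f (s.symm y)) y x)
      = univ.filter fun y : V => s.symm y < s.symm x :=
    Finset.filter_congr (fun y _ => hiff y)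
  have h4 : (univ.filter fun j : Fin d => j < s.symm x).card = ((s.symm x : ℕ)) := by
    rw [show (univ.filter fun j : Fin d => j < s.symm x) = Finset.Iio (s.symm x) by ext; simp,
      Fin.card_Iio]
  have h5 := card_filter_equiv s.symm (fun j : Fin d => j < s.symm x)
  show (univ.filter fun y : V => cltR (fun y : V => f (s.symm y)) y x).card = _
  rw [hset]
  exact h5.trans h4

end StepB2

section StepB3
variable {V : Type} [Fintype V] [DecidableEq V] [PartialOrder V]

lemma valid_f_unique {m : ℕ →₀ ℕ} {d : ℕ} {f g : Fin d → ℕ} (hf : Monotone f) (hg : Monotone g)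
    (hfm : m = ∑ j, Finsupp.single (f j) 1) (hgm : m = ∑ j, Finsupp.single (g j) 1) : f = g := by
  refine mono_eq_of_counts hf hg fun k => ?_
  have h1 := sum_single_apply f k
  have h2 := sum_single_apply g k
  rw [← h1, ← h2, ← hfm, ← hgm]

lemma cardValid_eq (m : ℕ →₀ ℕ) {d : ℕ} (hd : Fintype.card V = d) :
    ((univ : Finset (Fin d ≃ V)).filter fun s => Valid m s).card = (Cfin (V := V) m).card := by
  refine Finset.card_bij'
    (fun s hs => fun x : V => (Finset.mem_filter.mp hs).2.choose (s.symm x))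
    (fun c hc => seqOf (Finset.mem_filter.mp hc).2.1 hd) ?_ ?_ ?_ ?_
  · intro s hs
    suffices h : ∀ hv : Valid m s, (fun x : V => hv.choose (s.symm x)) ∈ Cfin m from h _
    intro hv
    obtain ⟨h1, h2, h3⟩ := hv.choose_spec
    rw [Cfin, mem_filter]
    refine ⟨?_, valid_coloring_proper h1 h2, ?_⟩
    · rw [Fintype.mem_piFinset]
      intro x
      rw [Finsupp.mem_support_iff]
      have h4 := (DFunLike.congr_fun h3 (hv.choose (s.symm x))).trans
        (sum_single_apply hv.choose (hv.choose (s.symm x)))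
      rw [h4]
      have : 0 < (univ.filter fun j => hv.choose j = hv.choose (s.symm x)).card :=
        Finset.card_pos.mpr ⟨s.symm x, by simp⟩
      omega
    · intro k
      have h5 := (DFunLike.congr_fun h3 k).trans (sum_single_apply hv.choose k)
      rw [h5]
      exact card_filter_equiv s.symm (fun j : Fin d => hv.choose j = k)
  · intro c hc
    rw [mem_filter]
    exact ⟨mem_univ _, seqOf_valid hc hd _⟩
  · intro s hs
    suffices h : ∀ (hv : Valid m s) (hp : properc fun x : V => hv.choose (s.symm x)),
        seqOf hp hd = s from h _ _
    intro hv hp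
    obtain ⟨h1, h2, h3⟩ := hv.choose_spec
    have key : ∀ x : V, rankE (fun x : V => hv.choose (s.symm x)) hd x = s.symm x :=
      fun x => Fin.ext (valid_rank h1 h2 x)
    refine Equiv.ext fun i => s.symm.injective ?_
    rw [Equiv.symm_apply_apply, ← key (seqOf hp hd i)]
    exact seqOf_rank hp hd i
  · intro c hc
    have hp : properc c := (Finset.mem_filter.mp hc).2.1
    suffices h : ∀ hv : Valid m (seqOf hp hd),
        (fun x : V => hv.choose ((seqOf hp hd).symm x)) = c from h _
    intro hv
    obtain ⟨h1, h2, h3⟩ := hv.choose_spec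
    have hceq : hv.choose = fun i => c (seqOf hp hd i) :=
      valid_f_unique h1 (seqOf_mono hp hd) h3 (seqOf_sum hc hd hp)
    funext x
    rw [hceq]
    simp

end StepB3

section StepC
variable {V : Type} [Fintype V] [DecidableEq V] [PartialOrder V]

lemma count_map_card {γ : Type} (s : Multiset γ) (f : γ → ℕ) (i : ℕ) :
    (s.map f).count i = (s.filter fun a => f a = i).card := by
  induction s using Multiset.induction_on with
  | empty => simp
  | cons a t IH =>
    by_cases h : f a = i
    · simp [Multiset.count_cons, Multiset.filter_cons, h, IH, eq_comm]
    · have h' : ¬ i = f a := fun hc => h hc.symm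
      simp [Multiset.count_cons, Multiset.filter_cons, h, h', IH]

lemma card_filter_subtype {γ : Type} [DecidableEq γ] (s : Finset γ) (p : γ → Prop)
    [DecidablePred p] :
    (univ.filter fun a : {x // x ∈ s} => p ↑a).card = (s.filter p).card := by
  refine Finset.card_bij (fun a _ => ↑a) ?_ ?_ ?_
  · intro a ha
    simp only [mem_filter, mem_univ, true_and] at ha
    exact mem_filter.mpr ⟨a.2, ha⟩
  · intro a _ b _ h
    exact Subtype.ext h
  · intro x hx
    rw [mem_filter] at hx
    exact ⟨⟨x, hx.1⟩, by simp [hx.2], rfl⟩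

noncomputable def blocksOf (c : V → ℕ) : Finset (Finset V) :=
  univ.image fun x => univ.filter fun y => c y = c x

-- facts about colorings in Cfin
lemma cfin_pi {m : ℕ →₀ ℕ} {c : V → ℕ} (hc : c ∈ Cfin m) : ∀ x, c x ∈ m.support :=
  Fintype.mem_piFinset.mp (mem_filter.mp hc).1

lemma cfin_proper {m : ℕ →₀ ℕ} {c : V → ℕ} (hc : c ∈ Cfin m) : properc c :=
  (mem_filter.mp hc).2.1

lemma cfin_count {m : ℕ →₀ ℕ} {c : V → ℕ} (hc : c ∈ Cfin m) :
    ∀ k, (univ.filter fun x => c x = k).card = m k := (mem_filter.mp hc).2.2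

lemma cfin_fiber_nonempty {m : ℕ →₀ ℕ} {c : V → ℕ} (hc : c ∈ Cfin m) {k : ℕ}
    (hk : k ∈ m.support) : ∃ x, c x = k := by
  have h1 := cfin_count hc k
  rw [Finsupp.mem_support_iff] at hk
  have : 0 < (univ.filter fun x => c x = k).card := by omega
  obtain ⟨x, hx⟩ := Finset.card_pos.mp this
  exact ⟨x, (mem_filter.mp hx).2⟩

lemma blocksOf_eq_image {m : ℕ →₀ ℕ} {c : V → ℕ} (hc : c ∈ Cfin m) :
    blocksOf c = m.support.image fun k => univ.filter fun y => c y = k := by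
  ext b
  rw [blocksOf, Finset.mem_image, Finset.mem_image]
  constructor
  · rintro ⟨x, -, rfl⟩
    exact ⟨c x, cfin_pi hc x, rfl⟩
  · rintro ⟨k, hk, rfl⟩
    obtain ⟨x, hx⟩ := cfin_fiber_nonempty hc hk
    exact ⟨x, mem_univ x, by rw [hx]⟩

lemma fiber_injOn {m : ℕ →₀ ℕ} {c : V → ℕ} (hc : c ∈ Cfin m) :
    Set.InjOn (fun k => univ.filter fun y => c y = k) m.support := by
  intro k hk k' hk' heq
  dsimp only at heq
  obtain ⟨x, hx⟩ := cfin_fiber_nonempty hc hk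
  have hx1 : x ∈ univ.filter fun y => c y = k := by simp [hx]
  rw [heq] at hx1
  rw [← hx, (mem_filter.mp hx1).2]

lemma blocksOf_sizes {m : ℕ →₀ ℕ} {c : V → ℕ} (hc : c ∈ Cfin m) :
    m.support.val.map ⇑m = (blocksOf c).val.map Finset.card := by
  rw [blocksOf_eq_image hc, Finset.image_val_of_injOn (fiber_injOn hc), Multiset.map_map]
  refine Multiset.map_congr rfl fun k _ => ?_
  exact (cfin_count hc k).symm

lemma blocksOf_mem {m : ℕ →₀ ℕ} {c : V → ℕ} (hc : c ∈ Cfin m) {b : Finset V}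
    (hb : b ∈ blocksOf c) : ∃ x, b = univ.filter fun y => c y = c x := by
  rw [blocksOf, Finset.mem_image] at hb
  obtain ⟨x, -, rfl⟩ := hb
  exact ⟨x, rfl⟩

lemma blocksOf_isPartition {m : ℕ →₀ ℕ} {c : V → ℕ} (hc : c ∈ Cfin m) :
    IsSetPartition (blocksOf c) := by
  refine ⟨?_, ?_, ?_⟩
  · intro b hb
    obtain ⟨x, rfl⟩ := blocksOf_mem hc hb
    exact ⟨x, by simp⟩
  · intro b hb b' hb' hne
    obtain ⟨x, rfl⟩ := blocksOf_mem hc hb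
    obtain ⟨y, rfl⟩ := blocksOf_mem hc hb'
    rw [Finset.disjoint_left]
    intro z hz hz'
    rw [mem_filter] at hz hz'
    exact hne (by rw [← hz.2, hz'.2])
  · refine Finset.eq_univ_of_forall fun z => Finset.mem_sup.mpr ?_
    exact ⟨univ.filter fun y => c y = c z, Finset.mem_image_of_mem _ (mem_univ z), by simp⟩

lemma blocksOf_stable {m : ℕ →₀ ℕ} {c : V → ℕ} (hc : c ∈ Cfin m) :
    ∀ b ∈ blocksOf c, ∀ x ∈ b, ∀ y ∈ b, ¬ (incGraph V).Adj x y := by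
  intro b hb x hx y hy hadj
  obtain ⟨z, rfl⟩ := blocksOf_mem hc hb
  rw [mem_filter] at hx hy
  have : c x = c y := by rw [hx.2, hy.2]
  rcases cfin_proper hc x y this with h | h
  · exact (show ¬ x ≤ y ∧ ¬ y ≤ x from hadj).1 h
  · exact (show ¬ x ≤ y ∧ ¬ y ≤ x from hadj).2 h

end StepC

section StepC2
variable {V : Type} [Fintype V] [DecidableEq V] [PartialOrder V]

lemma blocksOf_mem' {c : V → ℕ} {b : Finset V}
    (hb : b ∈ blocksOf c) : ∃ x, b = univ.filter fun y => c y = c x := by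
  rw [blocksOf, Finset.mem_image] at hb
  obtain ⟨x, -, rfl⟩ := hb
  exact ⟨x, rfl⟩

lemma fiber_card {m : ℕ →₀ ℕ} {P : Finset (Finset V)}
    (hpart : IsSetPartition P)
    (hstab : ∀ b ∈ P, ∀ x ∈ b, ∀ y ∈ b, ¬ (incGraph V).Adj x y)
    (hsize : m.support.val.map ⇑m = P.val.map Finset.card) :
    ((Cfin m).filter fun c => blocksOf c = P).card = rFact (m.support.val.map ⇑m) := by
  have huniq : ∀ x : V, ∃! b, b ∈ P ∧ x ∈ b := by
    intro x
    have hx : x ∈ P.sup id := by rw [hpart.2.2]; exact mem_univ x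
    obtain ⟨b, hb, hxb⟩ := Finset.mem_sup.mp hx
    refine ⟨b, ⟨hb, hxb⟩, ?_⟩
    rintro b' ⟨hb', hxb'⟩
    by_contra hne
    exact Finset.disjoint_left.mp (hpart.2.1 b' hb' b hb hne) hxb' hxb
  have hbmem : ∀ x : V, P.choose (fun b => x ∈ b) (huniq x) ∈ P :=
    fun x => Finset.choose_mem _ _ _
  have hbx : ∀ x : V, x ∈ P.choose (fun b => x ∈ b) (huniq x) :=
    fun x => Finset.choose_property (fun b => x ∈ b) P (huniq x)
  have hbeq : ∀ {x : V} {b : Finset V}, b ∈ P → x ∈ b →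
      P.choose (fun b => x ∈ b) (huniq x) = b := by
    intro x b hb hx
    exact (huniq x).unique ⟨hbmem x, hbx x⟩ ⟨hb, hx⟩
  have hPsuppcard : P.card = m.support.card := by
    have h0 := congrArg Multiset.card hsize
    rw [Multiset.card_map, Multiset.card_map] at h0
    exact h0.symm
  have hcount : ∀ i, (univ.filter fun a : {b // b ∈ P} => (a : Finset V).card = i).card
      = (m.support.filter fun k => m k = i).card := by
    intro i
    rw [card_filter_subtype P (fun b => b.card = i)]
    have h1 : (P.filter fun b => b.card = i).card = (P.val.map Finset.card).count i := by
      rw [count_map_card, Finset.card, Finset.filter_val]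
    have h2 : (m.support.filter fun k => m k = i).card = (m.support.val.map ⇑m).count i := by
      rw [count_map_card, Finset.card, Finset.filter_val]
    rw [h1, h2, hsize]
  have hsurj : ∀ g : {b // b ∈ P} → ℕ, (∀ a, g a ∈ m.support) → Function.Injective g →
      ∀ k ∈ m.support, ∃ a, g a = k := by
    intro g hgs hginj k hk
    have hbij : Function.Bijective
        (fun a : {b // b ∈ P} => (⟨g a, hgs a⟩ : {k // k ∈ m.support})) := by
      rw [Fintype.bijective_iff_injective_and_card]
      constructor
      · intro a a' h
        exact hginj (congrArg Subtype.val h)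
      · rw [Fintype.card_coe, Fintype.card_coe, hPsuppcard]
    obtain ⟨a, ha⟩ := hbij.2 ⟨k, hk⟩
    exact ⟨a, congrArg Subtype.val ha⟩
  have hW : ((Cfin m).filter fun c => blocksOf c = P).card
      = ((Fintype.piFinset fun _ : {b // b ∈ P} => m.support).filter fun g =>
          Function.Injective g ∧ ∀ a : {b // b ∈ P},
            (⇑m) (g a) = (fun a : {b // b ∈ P} => (a : Finset V).card) a).card := by
    refine Finset.card_bij'
      (fun c _ => fun a : {b // b ∈ P} => c (hpart.1 (a : Finset V) a.2).choose)
      (fun g _ => fun x : V => g ⟨P.choose (fun b => x ∈ b) (huniq x), hbmem x⟩)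
      ?_ ?_ ?_ ?_
    · intro c hc
      rw [mem_filter] at hc
      obtain ⟨hcC, hcb⟩ := hc
      have hfib : ∀ b, b ∈ P → ∀ x ∈ b, b = univ.filter fun y => c y = c x := by
        intro b hb x hx
        rw [← hcb] at hb
        obtain ⟨z, rfl⟩ := blocksOf_mem' hb
        have hcx : c x = c z := (mem_filter.mp hx).2
        ext y
        simp only [mem_filter, mem_univ, true_and]
        rw [hcx]
      have hpick : ∀ a : {b // b ∈ P}, (hpart.1 (a : Finset V) a.2).choose ∈ (a : Finset V) :=
        fun a => (hpart.1 (a : Finset V) a.2).choose_spec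
      rw [mem_filter, Fintype.mem_piFinset]
      refine ⟨fun a => cfin_pi hcC _, ?_, ?_⟩
      · intro a a' h
        dsimp only at h
        have e1 := hfib _ a.2 _ (hpick a)
        have e2 := hfib _ a'.2 _ (hpick a')
        apply Subtype.ext
        rw [e1, e2, h]
      · intro a
        dsimp only
        have e1 := hfib _ a.2 _ (hpick a)
        rw [← cfin_count hcC (c (hpart.1 (a : Finset V) a.2).choose), ← e1]
    · intro g hg
      rw [mem_filter, Fintype.mem_piFinset] at hg
      obtain ⟨hgs, hginj, hgw⟩ := hg
      have hfib2 : ∀ a : {b // b ∈ P},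
          (univ.filter fun x : V =>
            g ⟨P.choose (fun b => x ∈ b) (huniq x), hbmem x⟩ = g a) = (a : Finset V) := by
        intro a
        ext x
        simp only [mem_filter, mem_univ, true_and]
        constructor
        · intro h
          have h2 : (⟨P.choose (fun b => x ∈ b) (huniq x), hbmem x⟩ : {b // b ∈ P}) = a :=
            hginj h
          have hx := hbx x
          rw [← congrArg Subtype.val h2]
          exact hx
        · intro hx
          exact congrArg g (Subtype.ext (hbeq a.2 hx))
      rw [mem_filter]
      constructor
      · rw [Cfin, mem_filter, Fintype.mem_piFinset]
        refine ⟨fun x => hgs _, ?_, ?_⟩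
        · intro x y hxy
          dsimp only at hxy
          have hbxy : P.choose (fun b => x ∈ b) (huniq x)
              = P.choose (fun b => y ∈ b) (huniq y) :=
            congrArg Subtype.val (hginj hxy)
          have hyb : y ∈ P.choose (fun b => x ∈ b) (huniq x) := by
            rw [hbxy]; exact hbx y
          by_contra hcon
          push_neg at hcon
          exact hstab _ (hbmem x) x (hbx x) y hyb ⟨hcon.1, hcon.2⟩
        · intro k
          by_cases hex : ∃ a : {b // b ∈ P}, g a = k
          · obtain ⟨a, rfl⟩ := hex
            rw [hfib2 a]
            exact (hgw a).symm
          · push_neg at hex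
            have hempty : (univ.filter fun x : V =>
                g ⟨P.choose (fun b => x ∈ b) (huniq x), hbmem x⟩ = k) = ∅ := by
              rw [Finset.filter_eq_empty_iff]
              intro x _
              exact hex _
            rw [hempty]
            have hk : k ∉ m.support := by
              intro hk
              obtain ⟨a, ha⟩ := hsurj g hgs hginj k hk
              exact hex a ha
            rw [Finsupp.notMem_support_iff] at hk
            rw [hk]
            rfl
      · ext b
        constructor
        · intro hb
          obtain ⟨x, rfl⟩ := blocksOf_mem' hb
          have h10 := hfib2 ⟨P.choose (fun b => x ∈ b) (huniq x), hbmem x⟩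
          rw [h10]
          exact hbmem x
        · intro hb
          obtain ⟨x, hx⟩ := hpart.1 b hb
          rw [blocksOf, Finset.mem_image]
          refine ⟨x, mem_univ x, ?_⟩
          have h6 := hfib2 ⟨b, hb⟩
          have h8 : (⟨P.choose (fun b => x ∈ b) (huniq x), hbmem x⟩ : {b // b ∈ P})
              = ⟨b, hb⟩ := Subtype.ext (hbeq hb hx)
          rw [h8]
          exact h6
    · intro c hc
      rw [mem_filter] at hc
      obtain ⟨hcC, hcb⟩ := hc
      have hfib : ∀ b, b ∈ P → ∀ x ∈ b, b = univ.filter fun y => c y = c x := by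
        intro b hb x hx
        rw [← hcb] at hb
        obtain ⟨z, rfl⟩ := blocksOf_mem' hb
        have hcx : c x = c z := (mem_filter.mp hx).2
        ext y
        simp only [mem_filter, mem_univ, true_and]
        rw [hcx]
      funext x
      dsimp only
      have h9 := hfib _ (hbmem x) x (hbx x)
      have hpickmem := (hpart.1 (P.choose (fun b => x ∈ b) (huniq x)) (hbmem x)).choose_spec
      have h11 : (hpart.1 (P.choose (fun b => x ∈ b) (huniq x)) (hbmem x)).choose
          ∈ univ.filter fun y => c y = c x := by
        rw [← h9]
        exact hpickmem
      exact (mem_filter.mp h11).2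
    · intro g hg
      funext a
      dsimp only
      have hpickmem := (hpart.1 (a : Finset V) a.2).choose_spec
      exact congrArg g (Subtype.ext (hbeq a.2 hpickmem))
  rw [hW]
  have hkc := keycount (Fintype.card {b // b ∈ P})
    (fun a : {b // b ∈ P} => (a : Finset V).card) m.support ⇑m rfl
    (fun i => hcount i)
  rw [hkc, rFact]
  have himg : univ.image (fun a : {b // b ∈ P} => (a : Finset V).card)
      = (m.support.val.map ⇑m).toFinset := by
    ext i
    rw [Finset.mem_image, Multiset.mem_toFinset, hsize, Multiset.mem_map]
    constructor
    · rintro ⟨a, -, rfl⟩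
      exact ⟨(a : Finset V), Finset.mem_val.mpr a.2, rfl⟩
    · rintro ⟨b, hb, rfl⟩
      exact ⟨⟨b, Finset.mem_val.mp hb⟩, mem_univ _, rfl⟩
  have hcnti : ∀ i, (univ.filter fun a : {b // b ∈ P} => (a : Finset V).card = i).card
      = (m.support.val.map ⇑m).count i := by
    intro i
    rw [hcount i, count_map_card, Finset.card, Finset.filter_val]
  exact Finset.prod_congr himg (fun i _ => by rw [hcnti i])

end StepC2

section Final
variable {V : Type} [Fintype V] [DecidableEq V] [PartialOrder V]

lemma Qfun_eq_valid (m : ℕ →₀ ℕ) {d : ℕ} (s : Fin d ≃ V) :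
    Qfun d ((Finset.Ico 1 d).filter
      (fun i => ∃ h' : i - 1 < d, ∃ h : i < d, ¬ s ⟨i - 1, h'⟩ < s ⟨i, h⟩)) m
      = if Valid m s then 1 else 0 := by
  have h0 : Qfun d ((Finset.Ico 1 d).filter
      (fun i => ∃ h' : i - 1 < d, ∃ h : i < d, ¬ s ⟨i - 1, h'⟩ < s ⟨i, h⟩)) m
      = if (∃ f : Fin d → ℕ, Monotone f ∧
          (∀ i j : Fin d, (j : ℕ) = (i : ℕ) + 1 →
            (j : ℕ) ∈ (Finset.Ico 1 d).filter
              (fun i => ∃ h' : i - 1 < d, ∃ h : i < d, ¬ s ⟨i - 1, h'⟩ < s ⟨i, h⟩) →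
            f i < f j) ∧
          m = ∑ j, Finsupp.single (f j) 1) then (1 : ℚ) else 0 := rfl
  rw [h0]
  refine if_congr ?_ rfl rfl
  refine exists_congr fun f => and_congr_right fun _ => and_congr_left fun _ => ?_
  constructor
  · intro H i j hji hlt
    refine H i j hji ?_
    rw [Finset.mem_filter, Finset.mem_Ico]
    have hd' : (j : ℕ) - 1 < d := by have := j.isLt; omega
    refine ⟨⟨by omega, j.isLt⟩, hd', j.isLt, ?_⟩
    have e1 : (⟨(j : ℕ) - 1, hd'⟩ : Fin d) = i := Fin.ext (by simp; omega)
    have e2 : (⟨(j : ℕ), j.isLt⟩ : Fin d) = j := Fin.ext rfl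
    rw [e1, e2]
    exact hlt
  · intro H i j hji hmem
    refine H i j hji ?_
    rw [Finset.mem_filter] at hmem
    obtain ⟨-, h', h, hlt⟩ := hmem
    have e1 : (⟨(j : ℕ) - 1, h'⟩ : Fin d) = i := Fin.ext (by simp; omega)
    have e2 : (⟨(j : ℕ), h⟩ : Fin d) = j := Fin.ext rfl
    rw [e1, e2] at hlt
    exact hlt

theorem stmt13' {V : Type} [Fintype V] [DecidableEq V] [PartialOrder V] (d : ℕ)
    (hd : Fintype.card V = d) :
    XG (incGraph V)
      = ∑ s : Fin d ≃ V,
          Qfun d ((Finset.Ico 1 d).filter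
            (fun i => ∃ h' : i - 1 < d, ∃ h : i < d, ¬ s ⟨i - 1, h'⟩ < s ⟨i, h⟩)) := by
  refine MvPowerSeries.ext fun mm => ?_
  show XG (incGraph V) mm = (∑ s : Fin d ≃ V, Qfun d _) mm
  -- RHS
  have hR : (∑ s : Fin d ≃ V, Qfun d ((Finset.Ico 1 d).filter
      (fun i => ∃ h' : i - 1 < d, ∃ h : i < d, ¬ s ⟨i - 1, h'⟩ < s ⟨i, h⟩))) mm
      = ∑ s : Fin d ≃ V, Qfun d ((Finset.Ico 1 d).filter
      (fun i => ∃ h' : i - 1 < d, ∃ h : i < d, ¬ s ⟨i - 1, h'⟩ < s ⟨i, h⟩)) mm :=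
    map_sum (MvPowerSeries.coeff mm) _ _
  rw [hR]
  have hR2 : ∑ s : Fin d ≃ V, Qfun d ((Finset.Ico 1 d).filter
      (fun i => ∃ h' : i - 1 < d, ∃ h : i < d, ¬ s ⟨i - 1, h'⟩ < s ⟨i, h⟩)) mm
      = ∑ s : Fin d ≃ V, if Valid mm s then (1 : ℚ) else 0 :=
    Finset.sum_congr rfl fun s _ => Qfun_eq_valid mm s
  rw [hR2, Finset.sum_boole]
  -- LHS
  have hterm : ∀ P : Finset (Finset V), mAug (P.val.map Finset.card) mm
      = if mm.support.val.map ⇑mm = P.val.map Finset.card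
        then (rFact (P.val.map Finset.card) : ℚ) else 0 := by
    intro P
    have h1 : mAug (P.val.map Finset.card) mm
        = (rFact (P.val.map Finset.card) : ℚ)
          * (if mm.support.val.map ⇑mm = P.val.map Finset.card then 1 else 0) := rfl
    rw [h1]
    split_ifs <;> simp
  have hL : XG (incGraph V) mm = ∑ P ∈ univ.filter (fun P : Finset (Finset V) =>
      IsSetPartition P ∧ ∀ b ∈ P, ∀ x ∈ b, ∀ y ∈ b, ¬ (incGraph V).Adj x y),
      mAug (P.val.map Finset.card) mm := map_sum (MvPowerSeries.coeff mm) _ _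
  rw [hL]
  have hL2 : ∑ P ∈ univ.filter (fun P : Finset (Finset V) =>
      IsSetPartition P ∧ ∀ b ∈ P, ∀ x ∈ b, ∀ y ∈ b, ¬ (incGraph V).Adj x y),
      mAug (P.val.map Finset.card) mm
      = ∑ P ∈ (univ.filter (fun P : Finset (Finset V) =>
          IsSetPartition P ∧ ∀ b ∈ P, ∀ x ∈ b, ∀ y ∈ b, ¬ (incGraph V).Adj x y)).filter
          (fun P => mm.support.val.map ⇑mm = P.val.map Finset.card),
          (rFact (mm.support.val.map ⇑mm) : ℚ) := by
    rw [Finset.sum_congr rfl fun P _ => hterm P, ← Finset.sum_filter]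
    refine Finset.sum_congr rfl fun P hP => ?_
    rw [← (Finset.mem_filter.mp hP).2]
  rw [hL2]
  -- middle
  rw [cardValid_eq mm hd]
  have h3 : (Cfin (V := V) mm).card = ∑ P ∈ (univ.filter (fun P : Finset (Finset V) =>
      IsSetPartition P ∧ ∀ b ∈ P, ∀ x ∈ b, ∀ y ∈ b, ¬ (incGraph V).Adj x y)).filter
      (fun P => mm.support.val.map ⇑mm = P.val.map Finset.card),
      ((Cfin mm).filter fun c => blocksOf c = P).card :=
    Finset.card_eq_sum_card_fiberwise (fun c hc => Finset.mem_filter.mpr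
      ⟨Finset.mem_filter.mpr ⟨mem_univ _, blocksOf_isPartition hc, blocksOf_stable hc⟩,
        blocksOf_sizes hc⟩)
  have h4 : ∀ P ∈ (univ.filter (fun P : Finset (Finset V) =>
      IsSetPartition P ∧ ∀ b ∈ P, ∀ x ∈ b, ∀ y ∈ b, ¬ (incGraph V).Adj x y)).filter
      (fun P => mm.support.val.map ⇑mm = P.val.map Finset.card),
      ((Cfin mm).filter fun c => blocksOf c = P).card
        = rFact (mm.support.val.map ⇑mm) := by
    intro P hP
    obtain ⟨hPA, hPsize⟩ := Finset.mem_filter.mp hP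
    exact fiber_card (Finset.mem_filter.mp hPA).2.1 (Finset.mem_filter.mp hPA).2.2 hPsize
  rw [h3, Nat.cast_sum]
  exact (Finset.sum_congr rfl fun P hP => by rw [h4 P hP]).symm

end Final

/-- For a poset `P` with `d` elements,
`X_{inc(P)} = Σ_s Q_{D(s),d}` over all sequencings `s : {1,...,d} → P`, where
`D(s) = {i : s(i) ≮ s(i+1)}`. -/
theorem stmt13 {V : Type} [Fintype V] [DecidableEq V] [PartialOrder V] (d : ℕ)
    (hd : Fintype.card V = d) :
    XG (incGraph V)
      = ∑ s : Fin d ≃ V,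
          Qfun d ((Finset.Ico 1 d).filter
            (fun i => ∃ h' : i - 1 < d, ∃ h : i < d, ¬ s ⟨i - 1, h'⟩ < s ⟨i, h⟩)) :=
  stmt13' d hd
end
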